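/- arXiv:1901.04034 — 2 statements merged into one kernel-verified Lean document; each statement's English description precedes it below -/
import Mathlib

section
/- For a tree T of order d ≥ 5, c_{1,1}(T) = C(c_1(T), 2) + c_2(T), where C(a,b) denotes the binomial coefficient. -/
open SimpleGraph

/-- The multiset of orders of the connected components of a graph on a finite vertex set. -/
noncomputable def compSizes {V : Type} [Fintype V] (H : SimpleGraph V) : Multiset ℕ :=
  haveI : DecidableEq H.ConnectedComponent := Classical.decEq _
  (Finset.univ.image H.connectedComponentMk).val.map fun c => c.supp.ncard

/-- `cCoeff G lam` is the number of subsets `F` of the edge set of `G` such that the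
multiset of orders of the connected components of the spanning subgraph `(V, F)`
is exactly `lam`.  For a tree `T` this is the coefficient `c_lam(T)`. -/
noncomputable def cCoeff {V : Type} [Fintype V] (G : SimpleGraph V) (lam : Multiset ℕ) : ℕ :=
  Set.ncard {F : Set (Sym2 V) | F ⊆ G.edgeSet ∧ compSizes (SimpleGraph.fromEdgeSet F) = lam}

set_option linter.unusedSectionVars false
set_option maxHeartbeats 1600000
variable {V : Type} [Fintype V]

lemma reach_closed {H : SimpleGraph V} {S : Set V}
    (hS : ∀ x ∈ S, ∀ y, H.Adj x y → y ∈ S) {x y : V} (hx : x ∈ S)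
    (h : H.Reachable x y) : y ∈ S := by
  obtain ⟨w⟩ := h
  induction w with
  | nil => exact hx
  | cons h' p ih => exact ih (hS _ hx _ h')

lemma supp_mk_eq {H : SimpleGraph V} (x : V) :
    (H.connectedComponentMk x).supp = {y | H.Reachable y x} := by
  ext y
  simp [ConnectedComponent.mem_supp_iff, ConnectedComponent.eq, Set.mem_setOf_eq]

lemma isolated_supp {H : SimpleGraph V} {u : V} (h : ∀ y, ¬ H.Adj u y) :
    (H.connectedComponentMk u).supp = {u} := by
  ext y
  simp only [ConnectedComponent.mem_supp_iff, ConnectedComponent.eq, Set.mem_singleton_iff]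
  constructor
  · intro hr
    have := reach_closed (S := {u}) (fun x hx z hz => by
      simp only [Set.mem_singleton_iff] at hx; subst hx; exact absurd hz (h z)) rfl hr.symm
    simpa using this
  · rintro rfl; exact Reachable.refl _


variable {V : Type} [Fintype V]


lemma image_univ_mk_val2 {H : SimpleGraph V} [DecidableEq H.ConnectedComponent]
    {C1 C2 : H.ConnectedComponent} (hne : C1 ≠ C2)
    (hall : ∀ c, c = C1 ∨ c = C2) :
    (Finset.univ.image H.connectedComponentMk).val = C1 ::ₘ {C2} := by
  rw [Multiset.Nodup.ext (Finset.univ.image H.connectedComponentMk).nodup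
    (by simp [hne] : Multiset.Nodup (C1 ::ₘ {C2}))]
  intro c
  simp only [Finset.mem_val, Finset.mem_image, Multiset.mem_cons, Multiset.mem_singleton]
  constructor
  · rintro -; exact hall c
  · rintro -
    obtain ⟨v, hv⟩ := Quot.exists_rep c
    exact ⟨v, Finset.mem_univ v, hv⟩

lemma compSizes_two {H : SimpleGraph V} {C1 C2 : H.ConnectedComponent} (hne : C1 ≠ C2)
    (hall : ∀ c, c = C1 ∨ c = C2) :
    compSizes H = {C1.supp.ncard, C2.supp.ncard} := by
  unfold compSizes
  rw [@image_univ_mk_val2 V _ H (Classical.decEq _) _ _ hne hall]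
  simp

lemma image_univ_mk_val3 {H : SimpleGraph V} [DecidableEq H.ConnectedComponent]
    {C1 C2 C3 : H.ConnectedComponent} (h12 : C1 ≠ C2) (h13 : C1 ≠ C3) (h23 : C2 ≠ C3)
    (hall : ∀ c, c = C1 ∨ c = C2 ∨ c = C3) :
    (Finset.univ.image H.connectedComponentMk).val = C1 ::ₘ C2 ::ₘ {C3} := by
  rw [Multiset.Nodup.ext (Finset.univ.image H.connectedComponentMk).nodup
    (by simp [h12, h13, h23] : Multiset.Nodup (C1 ::ₘ C2 ::ₘ {C3}))]
  intro c
  simp only [Finset.mem_val, Finset.mem_image, Multiset.mem_cons, Multiset.mem_singleton]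
  constructor
  · rintro -; exact hall c
  · rintro -
    obtain ⟨v, hv⟩ := Quot.exists_rep c
    exact ⟨v, Finset.mem_univ v, hv⟩

lemma compSizes_three {H : SimpleGraph V} {C1 C2 C3 : H.ConnectedComponent}
    (h12 : C1 ≠ C2) (h13 : C1 ≠ C3) (h23 : C2 ≠ C3)
    (hall : ∀ c, c = C1 ∨ c = C2 ∨ c = C3) :
    compSizes H = {C1.supp.ncard, C2.supp.ncard, C3.supp.ncard} := by
  unfold compSizes
  rw [@image_univ_mk_val3 V _ H (Classical.decEq _) _ _ _ h12 h13 h23 hall]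
  simp

lemma compSizes_two_inv {H : SimpleGraph V} {a b : ℕ} (h : compSizes H = {a, b}) :
    ∃ C1 C2 : H.ConnectedComponent, C1 ≠ C2 ∧ (∀ c, c = C1 ∨ c = C2) ∧
      ({C1.supp.ncard, C2.supp.ncard} : Multiset ℕ) = {a, b} := by
  unfold compSizes at h
  have hc : (@Finset.image _ _ (Classical.decEq _) H.connectedComponentMk Finset.univ).val.card = 2 := by
    have := congrArg Multiset.card h
    simpa using this
  obtain ⟨C1, C2, hM2⟩ := Multiset.card_eq_two.mp hc
  have hnd := (@Finset.image _ _ (Classical.decEq _) H.connectedComponentMk Finset.univ).nodup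
  rw [hM2] at hnd
  have hne : C1 ≠ C2 := by simpa using hnd
  refine ⟨C1, C2, hne, fun c => ?_, ?_⟩
  · have : c ∈ (@Finset.image _ _ (Classical.decEq _) H.connectedComponentMk Finset.univ).val := by
      obtain ⟨v, hv⟩ := Quot.exists_rep c
      simp only [Finset.mem_val, Finset.mem_image]
      exact ⟨v, Finset.mem_univ v, hv⟩
    rw [hM2] at this
    simpa using this
  · rw [hM2] at h
    simpa using h

lemma compSizes_three_inv {H : SimpleGraph V} {a b c : ℕ} (h : compSizes H = {a, b, c}) :
    ∃ C1 C2 C3 : H.ConnectedComponent, C1 ≠ C2 ∧ C1 ≠ C3 ∧ C2 ≠ C3 ∧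
      (∀ c', c' = C1 ∨ c' = C2 ∨ c' = C3) ∧
      ({C1.supp.ncard, C2.supp.ncard, C3.supp.ncard} : Multiset ℕ) = {a, b, c} := by
  unfold compSizes at h
  have hc : (@Finset.image _ _ (Classical.decEq _) H.connectedComponentMk Finset.univ).val.card = 3 := by
    have := congrArg Multiset.card h
    simpa using this
  obtain ⟨C1, C2, C3, hM2⟩ := Multiset.card_eq_three.mp hc
  have hnd := (@Finset.image _ _ (Classical.decEq _) H.connectedComponentMk Finset.univ).nodup
  rw [hM2] at hnd
  simp only [Multiset.insert_eq_cons, Multiset.nodup_cons, Multiset.mem_cons, Multiset.mem_singleton] at hnd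
  refine ⟨C1, C2, C3, ?_, ?_, ?_, fun c' => ?_, ?_⟩
  · exact fun he => hnd.1 (Or.inl he)
  · exact fun he => hnd.1 (Or.inr he)
  · exact fun he => hnd.2.1 (by simpa using he)
  · have : c' ∈ (@Finset.image _ _ (Classical.decEq _) H.connectedComponentMk Finset.univ).val := by
      obtain ⟨v, hv⟩ := Quot.exists_rep c'
      simp only [Finset.mem_val, Finset.mem_image]
      exact ⟨v, Finset.mem_univ v, hv⟩
    rw [hM2] at this
    simpa using this
  · rw [hM2] at h
    simpa using h

lemma pair_eq_nat {x y a b : ℕ} (h : ({x, y} : Multiset ℕ) = {a, b}) :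
    (x = a ∧ y = b) ∨ (x = b ∧ y = a) := by
  have hx : x ∈ ({a, b} : Multiset ℕ) := h ▸ by simp
  simp only [Multiset.insert_eq_cons, Multiset.mem_cons, Multiset.mem_singleton] at hx
  rcases hx with rfl | rfl
  · left
    refine ⟨rfl, ?_⟩
    have := (Multiset.cons_inj_right x).mp h
    simpa using this
  · right
    refine ⟨rfl, ?_⟩
    rw [Multiset.pair_comm a x] at h
    have := (Multiset.cons_inj_right x).mp h
    simpa using this

lemma triple_match_nat {x y z a : ℕ} (ha : a ≠ 1) (h : ({x, y, z} : Multiset ℕ) = {a, 1, 1}) :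
    (x = a ∧ y = 1 ∧ z = 1) ∨ (y = a ∧ x = 1 ∧ z = 1) ∨ (z = a ∧ x = 1 ∧ y = 1) := by
  have hx : x ∈ ({a, 1, 1} : Multiset ℕ) := h ▸ by simp
  simp only [Multiset.insert_eq_cons, Multiset.mem_cons, Multiset.mem_singleton] at hx
  rcases hx with rfl | rfl | rfl
  · left
    have h2 := (Multiset.cons_inj_right x).mp h
    rcases pair_eq_nat h2 with ⟨h3, h4⟩ | ⟨h3, h4⟩ <;> exact ⟨rfl, h3, h4⟩
  · have h2 : ({y, z} : Multiset ℕ) = {a, 1} := by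
      have hc : (1 ::ₘ ({y, z} : Multiset ℕ)) = 1 ::ₘ {a, 1} := by
        simp only [Multiset.insert_eq_cons] at h ⊢
        rw [h, Multiset.cons_swap]
      exact (Multiset.cons_inj_right 1).mp hc
    rcases pair_eq_nat h2 with ⟨h3, h4⟩ | ⟨h3, h4⟩
    · right; left; exact ⟨h3, rfl, h4⟩
    · right; right; exact ⟨h4, rfl, h3⟩
  · have h2 : ({y, z} : Multiset ℕ) = {a, 1} := by
      have hc : (1 ::ₘ ({y, z} : Multiset ℕ)) = 1 ::ₘ {a, 1} := by
        simp only [Multiset.insert_eq_cons] at h ⊢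
        rw [h, Multiset.cons_swap]
      exact (Multiset.cons_inj_right 1).mp hc
    rcases pair_eq_nat h2 with ⟨h3, h4⟩ | ⟨h3, h4⟩
    · right; left; exact ⟨h3, rfl, h4⟩
    · right; right; exact ⟨h4, rfl, h3⟩

lemma ncard_compl_singleton (u : V) : ({u}ᶜ : Set V).ncard = Fintype.card V - 1 := by
  rw [Set.compl_eq_univ_diff, Set.ncard_diff (Set.subset_univ _), Set.ncard_univ,
    Nat.card_eq_fintype_card, Set.ncard_singleton]

lemma ncard_compl_pair {u v : V} (h : u ≠ v) :
    ({u, v}ᶜ : Set V).ncard = Fintype.card V - 2 := by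
  rw [Set.compl_eq_univ_diff, Set.ncard_diff (Set.subset_univ _), Set.ncard_univ,
    Nat.card_eq_fintype_card, Set.ncard_pair h]
set_option linter.unusedSectionVars false
set_option maxHeartbeats 800000
variable {V : Type} [Fintype V]

lemma exists_first_edge {G : SimpleGraph V} {u y : V} (w : G.Walk u y) (h : u ≠ y) :
    ∃ b, G.Adj u b ∧ s(u, b) ∈ w.edges := by
  cases w with
  | nil => exact absurd rfl h
  | cons h' p => exact ⟨_, h', by simp⟩

lemma interior_two_nbrs {G : SimpleGraph V} {x y u : V} (p : G.Walk x y) (hp : p.IsPath)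
    (hu : u ∈ p.support) (hx : u ≠ x) (hy : u ≠ y) :
    ∃ a b, a ≠ b ∧ G.Adj u a ∧ G.Adj u b ∧ a ∈ p.support ∧ b ∈ p.support := by
  classical
  obtain ⟨b, hb, hbe⟩ := exists_first_edge (p.dropUntil u hu) hy
  obtain ⟨a, ha, hae'⟩ := exists_first_edge (p.takeUntil u hu).reverse hx
  have hae : s(u, a) ∈ (p.takeUntil u hu).edges := by
    simpa [Walk.edges_reverse] using hae'
  have hsplit : (p.takeUntil u hu).append (p.dropUntil u hu) = p := p.take_spec hu
  have hnd : ((p.takeUntil u hu).edges ++ (p.dropUntil u hu).edges).Nodup := by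
    rw [← Walk.edges_append, hsplit]
    exact hp.isTrail.edges_nodup
  have hne : s(u, a) ≠ s(u, b) := by
    intro he
    exact (List.disjoint_of_nodup_append hnd) hae (he ▸ hbe)
  refine ⟨a, b, fun hab => hne (by rw [hab]), ha, hb, ?_, ?_⟩
  · exact p.support_takeUntil_subset hu (Walk.snd_mem_support_of_mem_edges _ hae)
  · exact p.support_dropUntil_subset hu (Walk.snd_mem_support_of_mem_edges _ hbe)

variable {T : SimpleGraph V} {F : Set (Sym2 V)}

lemma not_reach_of_not_mem (hT : T.IsTree) (hF : F ⊆ T.edgeSet) {x y : V}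
    (hxy : T.Adj x y) (he : s(x, y) ∉ F) : ¬ (fromEdgeSet F).Reachable x y := by
  have hb : T.IsBridge s(x, y) := (isAcyclic_iff_forall_adj_isBridge.mp hT.IsAcyclic) hxy
  rw [isBridge_iff] at hb
  intro h
  refine hb (h.mono ?_)
  intro a b hab
  rw [fromEdgeSet_adj] at hab
  simp only [deleteEdges, sdiff_adj, fromEdgeSet_adj, Set.mem_singleton_iff]
  refine ⟨(mem_edgeSet T).mp (hF hab.1), ?_⟩
  rintro ⟨heq, -⟩
  exact he (heq ▸ hab.1)

lemma reach_to_path (hF : F ⊆ T.edgeSet) {x y : V} (h : (fromEdgeSet F).Reachable x y) :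
    ∃ p : T.Walk x y, p.IsPath ∧ ∀ e ∈ p.edges, e ∈ F := by
  classical
  obtain ⟨w⟩ := h
  have hsub : ∀ e ∈ w.edges, e ∈ T.edgeSet := by
    intro e he
    have := w.edges_subset_edgeSet he
    rw [edgeSet_fromEdgeSet] at this
    exact hF this.1
  refine ⟨(w.transfer T hsub).bypass, Walk.bypass_isPath _, fun e he => ?_⟩
  have h1 : e ∈ (w.transfer T hsub).edges := Walk.edges_bypass_subset _ he
  rw [Walk.edges_transfer] at h1
  have := w.edges_subset_edgeSet h1
  rw [edgeSet_fromEdgeSet] at this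
  exact this.1

lemma not_reach_of_path (hT : T.IsTree) (hF : F ⊆ T.edgeSet) {x y : V} (p : T.Walk x y)
    (hp : p.IsPath) {e : Sym2 V} (hep : e ∈ p.edges) (he : e ∉ F) :
    ¬ (fromEdgeSet F).Reachable x y := by
  intro h
  obtain ⟨q, hq, hqF⟩ := reach_to_path hF h
  have heq : (⟨p, hp⟩ : T.Path x y) = ⟨q, hq⟩ := hT.IsAcyclic.path_unique _ _
  have hpq : p = q := Subtype.ext_iff.mp heq
  exact he (hqF e (hpq ▸ hep))

lemma edge_mem_of_reach (hT : T.IsTree) (hF : F ⊆ T.edgeSet) {x y : V} (hxy : T.Adj x y)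
    (h : (fromEdgeSet F).Reachable x y) : s(x, y) ∈ F := by
  by_contra he
  exact not_reach_of_not_mem hT hF hxy he h

lemma reach_of_good_path {x y : V} (p : T.Walk x y) (hpF : ∀ e ∈ p.edges, e ∈ F) :
    (fromEdgeSet F).Reachable x y := by
  refine ⟨p.transfer (fromEdgeSet F) fun e he => ?_⟩
  rw [edgeSet_fromEdgeSet]
  exact ⟨hpF e he, T.not_isDiag_of_mem_edgeSet (p.edges_subset_edgeSet he)⟩

lemma path2 {a u b : V} (hau : T.Adj a u) (hub : T.Adj u b) (hab : a ≠ b) :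
    (Walk.cons hau (Walk.cons hub Walk.nil)).IsPath := by
  simp [Walk.isPath_def, hau.ne, hub.ne, hab]

lemma no_triangle (hT : T.IsTree) {u v a : V} (huv : T.Adj u v) (hua : T.Adj u a)
    (hav : T.Adj a v) : False := by
  have h := hT.IsAcyclic.path_unique ⟨Walk.cons huv Walk.nil, by simp [huv.ne]⟩
    ⟨Walk.cons hua (Walk.cons hav Walk.nil), path2 hua hav huv.ne⟩
  have h2 := congrArg (fun q : T.Path u v => q.1.length) h
  simp [Walk.length] at h2

lemma path3 {a u v b : V} (hau : T.Adj a u) (huv : T.Adj u v) (hvb : T.Adj v b)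
    (hab : a ≠ b) (hav : a ≠ v) (hub : u ≠ b) :
    (Walk.cons hau (Walk.cons huv (Walk.cons hvb Walk.nil))).IsPath := by
  simp [Walk.isPath_def, hau.ne, huv.ne, hvb.ne, hab, hav, hub]

lemma leaf_not_interior {u w x y : V} (hleaf : T.neighborSet u = {w}) (p : T.Walk x y)
    (hp : p.IsPath) (hx : u ≠ x) (hy : u ≠ y) : u ∉ p.support := by
  intro hu
  obtain ⟨a, b, hab, ha, hb, -, -⟩ := interior_two_nbrs p hp hu hx hy
  have ha' : a ∈ T.neighborSet u := ha
  have hb' : b ∈ T.neighborSet u := hb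
  rw [hleaf] at ha' hb'
  exact hab (ha'.trans hb'.symm)

lemma reach_of_L (hT : T.IsTree) {L : Set V}
    (hF2 : ∀ e ∈ T.edgeSet, (∀ u ∈ L, ¬ u ∈ e) → e ∈ F)
    (hL : ∀ u ∈ L, ∀ (x y : V) (p : T.Walk x y), p.IsPath → x ∉ L → y ∉ L → u ∉ p.support)
    {x y : V} (hx : x ∉ L) (hy : y ∉ L) : (fromEdgeSet F).Reachable x y := by
  classical
  obtain ⟨w⟩ := hT.isConnected.preconnected x y
  refine reach_of_good_path w.bypass fun e he => ?_
  refine hF2 e (w.bypass.edges_subset_edgeSet he) ?_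
  intro u hu hue
  have hus : u ∈ w.bypass.support := by
    induction e with
    | h a b =>
      rcases Sym2.mem_iff.mp hue with rfl | rfl
      · exact Walk.fst_mem_support_of_mem_edges _ he
      · exact Walk.snd_mem_support_of_mem_edges _ he
  exact hL u hu x y w.bypass w.bypass_isPath hx hy hus

lemma reach_from_isolated {H : SimpleGraph V} {u x0 : V} (hiso : ∀ y, ¬ H.Adj u y)
    (hr : H.Reachable u x0) : x0 = u := by
  have := reach_closed (S := {u}) (fun s hs z hz => by
    rw [Set.mem_singleton_iff] at hs; subst hs; exact absurd hz (hiso z)) rfl hr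
  simpa using this

def PendSet (T : SimpleGraph V) : Set (Sym2 V) :=
  {e | ∃ u w : V, T.neighborSet u = {w} ∧ e = s(u, w)}

lemma pend_adj {T : SimpleGraph V} {u w : V} (h : T.neighborSet u = {w}) : T.Adj u w := by
  have : w ∈ T.neighborSet u := by rw [h]; rfl
  exact this

lemma pendSet_subset {T : SimpleGraph V} : PendSet T ⊆ T.edgeSet := by
  rintro e ⟨u, w, h, rfl⟩
  exact (pend_adj h)

lemma closed_eq_univ {T : SimpleGraph V} (hT : T.IsTree) {S : Set V}
    (hS : ∀ x ∈ S, ∀ y, T.Adj x y → y ∈ S) {x0 : V} (hx0 : x0 ∈ S) : S = Set.univ := by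
  ext y
  simp only [Set.mem_univ, iff_true]
  exact reach_closed hS hx0 (hT.isConnected.preconnected x0 y)

theorem charQ1 {T : SimpleGraph V} (hT : T.IsTree) {d : ℕ} (hd : Fintype.card V = d)
    (hd5 : 5 ≤ d) :
    {F : Set (Sym2 V) | F ⊆ T.edgeSet ∧ compSizes (fromEdgeSet F) = {d - 1, 1}}
      = (fun e => T.edgeSet \ {e}) '' PendSet T := by
  apply Set.eq_of_subset_of_subset
  · rintro F ⟨hF, hcs⟩
    obtain ⟨C1, C2, hne, hall, hsz⟩ := compSizes_two_inv hcs
    have key : ∀ C1 C2 : (fromEdgeSet F).ConnectedComponent, C1 ≠ C2 →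
        (∀ c, c = C1 ∨ c = C2) → C2.supp.ncard = 1 →
        F ∈ (fun e => T.edgeSet \ {e}) '' PendSet T := by
      clear hne hall hsz C1 C2
      intro C1 C2 hne hall h2
      obtain ⟨u, hu⟩ := Set.ncard_eq_one.mp h2
      have hmku : (fromEdgeSet F).connectedComponentMk u = C2 := by
        have : u ∈ C2.supp := by rw [hu]; rfl
        exact this
      have hiso : ∀ y, ¬ (fromEdgeSet F).Adj u y := by
        intro y hy
        have : y ∈ C2.supp := by
          rw [← hmku]
          exact ConnectedComponent.eq.mpr ⟨hy.symm.toWalk⟩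
        rw [hu] at this
        exact hy.ne' this
      have hCx : ∀ x, x ≠ u → (fromEdgeSet F).connectedComponentMk x = C1 := by
        intro x hx
        rcases hall ((fromEdgeSet F).connectedComponentMk x) with h | h
        · exact h
        · exfalso
          have : x ∈ C2.supp := by rw [← h]; rfl
          rw [hu] at this
          exact hx this
      have hreach : ∀ x y, x ≠ u → y ≠ u → (fromEdgeSet F).Reachable x y := by
        intro x y hx hy
        exact ConnectedComponent.eq.mp ((hCx x hx).trans (hCx y hy).symm)
      -- u has a neighbor
      have hcard2 : 1 < Fintype.card V := by omega
      obtain ⟨x0, hx0⟩ := Fintype.exists_ne_of_one_lt_card hcard2 u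
      obtain ⟨w0⟩ := hT.isConnected.preconnected u x0
      obtain ⟨a, ha, -⟩ := exists_first_edge w0 (Ne.symm hx0)
      -- u has a unique neighbor
      have huniq : ∀ b, T.Adj u b → b = a := by
        intro b hb
        by_contra hba
        have hra : ¬ (fromEdgeSet F).Reachable a b := by
          refine not_reach_of_path hT hF (Walk.cons ha.symm (Walk.cons hb Walk.nil))
            (path2 ha.symm hb (fun h => hba h.symm)) (e := s(a, u)) (by simp) ?_
          rw [Sym2.eq_swap]
          intro hmem
          exact hiso a ((fromEdgeSet_adj _).mpr ⟨hmem, ha.ne⟩)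
        exact hra (hreach a b ha.ne' hb.ne')
      have hNU : T.neighborSet u = {a} := by
        ext b
        simp only [mem_neighborSet, Set.mem_singleton_iff]
        exact ⟨fun hb => huniq b hb, fun hb => hb ▸ ha⟩
      refine ⟨s(u, a), ⟨u, a, hNU, rfl⟩, ?_⟩
      symm
      ext e'
      simp only [Set.mem_diff, Set.mem_singleton_iff]
      constructor
      · intro he'
        refine ⟨hF he', ?_⟩
        rintro rfl
        exact hiso a ((fromEdgeSet_adj _).mpr ⟨he', ha.ne⟩)
      · rintro ⟨he', hne'⟩
        induction e' with
        | h p q =>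
          have hpq : T.Adj p q := (mem_edgeSet T).mp he'
          by_cases hp : p = u
          · subst hp
            exact absurd (by rw [huniq q hpq]) hne'
          · by_cases hq : q = u
            · subst hq
              exfalso
              apply hne'
              rw [huniq p hpq.symm, Sym2.eq_swap]
            · exact edge_mem_of_reach hT hF hpq (hreach p q hp hq)
    rcases pair_eq_nat hsz with ⟨h1, h2⟩ | ⟨h1, h2⟩
    · exact key C1 C2 hne hall h2
    · exact key C2 C1 hne.symm (fun c => (hall c).symm) h1
  · rintro F ⟨e, ⟨u, w, hleaf, rfl⟩, rfl⟩
    have huw : T.Adj u w := pend_adj hleaf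
    refine ⟨Set.diff_subset, ?_⟩
    have hiso : ∀ y, ¬ (fromEdgeSet (T.edgeSet \ {s(u, w)})).Adj u y := by
      intro y hy
      rw [fromEdgeSet_adj] at hy
      obtain ⟨⟨hyE, hynot⟩, -⟩ := hy
      have : y ∈ T.neighborSet u := (mem_edgeSet T).mp hyE
      rw [hleaf] at this
      have hyw : y = w := this
      subst hyw
      exact hynot rfl
    have hC2 : ((fromEdgeSet (T.edgeSet \ {s(u, w)})).connectedComponentMk u).supp = {u} :=
      isolated_supp hiso
    have hcard2 : 1 < Fintype.card V := by omega
    obtain ⟨x0, hx0⟩ := Fintype.exists_ne_of_one_lt_card hcard2 u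
    have hreach : ∀ x y : V, x ≠ u → y ≠ u →
        (fromEdgeSet (T.edgeSet \ {s(u, w)})).Reachable x y := by
      intro x y hx hy
      refine reach_of_L hT (L := {u}) ?_ ?_ hx hy
      · intro e' he' hnot
        refine ⟨he', ?_⟩
        intro hmem
        rw [Set.mem_singleton_iff] at hmem
        exact hnot u rfl (hmem ▸ Sym2.mem_mk_left u w)
      · rintro z rfl x' y' p hp hx' hy'
        exact leaf_not_interior hleaf p hp (Ne.symm hx') (Ne.symm hy')
    have hC1 : ((fromEdgeSet (T.edgeSet \ {s(u, w)})).connectedComponentMk x0).supp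
        = {u}ᶜ := by
      rw [supp_mk_eq]
      ext y
      simp only [Set.mem_setOf_eq, Set.mem_compl_iff, Set.mem_singleton_iff]
      constructor
      · intro hr
        rintro rfl
        have := reach_closed (S := {y})
          (fun s hs z hz => by
            rw [Set.mem_singleton_iff] at hs; subst hs; exact absurd hz (hiso z)) rfl hr
        exact hx0 (by simpa using this)
      · intro hy
        exact hreach y x0 hy hx0
    have hnecomp : (fromEdgeSet (T.edgeSet \ {s(u, w)})).connectedComponentMk x0
        ≠ (fromEdgeSet (T.edgeSet \ {s(u, w)})).connectedComponentMk u := by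
      intro h
      have : x0 ∈ ((fromEdgeSet (T.edgeSet \ {s(u, w)})).connectedComponentMk u).supp := by
        rw [← h]; rfl
      rw [hC2] at this
      exact hx0 this
    have hall : ∀ c : (fromEdgeSet (T.edgeSet \ {s(u, w)})).ConnectedComponent,
        c = (fromEdgeSet (T.edgeSet \ {s(u, w)})).connectedComponentMk x0
        ∨ c = (fromEdgeSet (T.edgeSet \ {s(u, w)})).connectedComponentMk u := by
      intro c
      obtain ⟨v, rfl⟩ := Quot.exists_rep c
      by_cases hv : v = u
      · right; subst hv; rfl
      · left
        exact ConnectedComponent.eq.mpr (hreach v x0 hv hx0)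
    rw [compSizes_two hnecomp hall, hC1, hC2, ncard_compl_singleton, hd, Set.ncard_singleton]

def ChainCfg (T : SimpleGraph V) : Set (V × V × V) :=
  {t | T.neighborSet t.1 = {t.2.1} ∧ T.neighborSet t.2.1 = {t.1, t.2.2} ∧ t.1 ≠ t.2.2}

lemma exists_not_mem_pair {u v : V} (h : 2 < Fintype.card V) :
    ∃ x, x ∉ ({u, v} : Set V) := by
  by_contra hc
  push_neg at hc
  have huniv : (Set.univ : Set V) = {u, v} := by
    apply Set.eq_of_subset_of_subset (fun x _ => hc x) (Set.subset_univ _)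
  have h1 : (Set.univ : Set V).ncard = Fintype.card V := by
    rw [Set.ncard_univ, Nat.card_eq_fintype_card]
  have h2 : ({u, v} : Set V).ncard ≤ 2 := by
    apply le_trans (Set.ncard_insert_le _ _)
    simp
  rw [huniv] at h1
  omega


lemma chain_not_interior {T : SimpleGraph V} {u v w x y : V}
    (hNU : T.neighborSet u = {v}) (hNV : T.neighborSet v = {u, w})
    (p : T.Walk x y) (hp : p.IsPath) (hxu : u ≠ x) (hyu : u ≠ y) (hxv : v ≠ x) (hyv : v ≠ y) :
    v ∉ p.support := by
  intro hv
  obtain ⟨a, b, hab, ha, hb, has, hbs⟩ := interior_two_nbrs p hp hv hxv hyv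
  have ha' : a ∈ ({u, w} : Set V) := hNV ▸ ha
  have hb' : b ∈ ({u, w} : Set V) := hNV ▸ hb
  simp only [Set.mem_insert_iff, Set.mem_singleton_iff] at ha' hb'
  have hu_supp : u ∈ p.support := by
    rcases ha' with rfl | rfl
    · exact has
    · rcases hb' with rfl | rfl
      · exact hbs
      · exact absurd rfl hab
  exact leaf_not_interior hNU p hp hxu hyu hu_supp

theorem charQ2 {T : SimpleGraph V} (hT : T.IsTree) {d : ℕ} (hd : Fintype.card V = d)
    (hd5 : 5 ≤ d) :
    {F : Set (Sym2 V) | F ⊆ T.edgeSet ∧ compSizes (fromEdgeSet F) = {d - 2, 2}}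
      = (fun t : V × V × V => T.edgeSet \ {s(t.2.1, t.2.2)}) '' ChainCfg T := by
  apply Set.eq_of_subset_of_subset
  · rintro F ⟨hF, hcs⟩
    obtain ⟨C1, C2, hne, hall, hsz⟩ := compSizes_two_inv hcs
    have key : ∀ C1 C2 : (fromEdgeSet F).ConnectedComponent, C1 ≠ C2 →
        (∀ c, c = C1 ∨ c = C2) → C2.supp.ncard = 2 →
        F ∈ (fun t : V × V × V => T.edgeSet \ {s(t.2.1, t.2.2)}) '' ChainCfg T := by
      clear hne hall hsz C1 C2
      intro C1 C2 hne hall h2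
      obtain ⟨u, v, huv, hsupp⟩ := Set.ncard_eq_two.mp h2
      have hmem_supp : ∀ y, y ∈ C2.supp ↔ (fromEdgeSet F).connectedComponentMk y = C2 :=
        fun y => Iff.rfl
      have hmku : (fromEdgeSet F).connectedComponentMk u = C2 := by
        rw [← hmem_supp, hsupp]; left; rfl
      have hmkv : (fromEdgeSet F).connectedComponentMk v = C2 := by
        rw [← hmem_supp, hsupp]; right; rfl
      have hadj_u : ∀ y, (fromEdgeSet F).Adj u y → y = v := by
        intro y hy
        have hyC : y ∈ C2.supp := by
          rw [hmem_supp, ← hmku]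
          exact ConnectedComponent.eq.mpr ⟨hy.symm.toWalk⟩
        rw [hsupp] at hyC
        rcases hyC with rfl | h
        · exact absurd rfl hy.ne'
        · exact h
      have hadj_v : ∀ y, (fromEdgeSet F).Adj v y → y = u := by
        intro y hy
        have hyC : y ∈ C2.supp := by
          rw [hmem_supp, ← hmkv]
          exact ConnectedComponent.eq.mpr ⟨hy.symm.toWalk⟩
        rw [hsupp] at hyC
        rcases hyC with h | rfl
        · exact h
        · exact absurd rfl hy.ne'
      have hreach_uv : (fromEdgeSet F).Reachable u v :=
        ConnectedComponent.eq.mp (hmku.trans hmkv.symm)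
      have hHuv : (fromEdgeSet F).Adj u v := by
        obtain ⟨wk⟩ := hreach_uv
        obtain ⟨b, hb, -⟩ := exists_first_edge wk huv
        rwa [hadj_u b hb] at hb
      have huvF : s(u, v) ∈ F := ((fromEdgeSet_adj _).mp hHuv).1
      have huvT : T.Adj u v := (mem_edgeSet T).mp (hF huvF)
      have hCx : ∀ x, x ∉ C2.supp → (fromEdgeSet F).connectedComponentMk x = C1 := by
        intro x hx
        rcases hall ((fromEdgeSet F).connectedComponentMk x) with h | h
        · exact h
        · exact absurd ((hmem_supp x).mpr h) hx
      have hreach_out : ∀ x y, x ∉ C2.supp → y ∉ C2.supp → (fromEdgeSet F).Reachable x y := by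
        intro x y hx hy
        exact ConnectedComponent.eq.mp ((hCx x hx).trans (hCx y hy).symm)
      have hnotsupp : ∀ x, x ≠ u → x ≠ v → x ∉ C2.supp := by
        intro x h1 h2 hx
        rw [hsupp] at hx
        rcases hx with rfl | rfl
        · exact h1 rfl
        · exact h2 rfl
      have hnoF_u : ∀ a, a ≠ v → s(u, a) ∉ F := by
        intro a hav hin
        have hadj : T.Adj u a := (mem_edgeSet T).mp (hF hin)
        exact hav (hadj_u a ((fromEdgeSet_adj _).mpr ⟨hin, hadj.ne⟩))
      have hnoF_v : ∀ a, a ≠ u → s(v, a) ∉ F := by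
        intro a hav hin
        have hadj : T.Adj v a := (mem_edgeSet T).mp (hF hin)
        exact hav (hadj_v a ((fromEdgeSet_adj _).mpr ⟨hin, hadj.ne⟩))
      have huniq_u : ∀ a b, T.Adj u a → T.Adj u b → a ≠ v → b ≠ v → a = b := by
        intro a b ha hb hav hbv
        by_contra hab
        have hra : ¬ (fromEdgeSet F).Reachable a b := by
          refine not_reach_of_path hT hF (Walk.cons ha.symm (Walk.cons hb Walk.nil))
            (path2 ha.symm hb hab) (e := s(a, u)) (by simp) ?_
          rw [Sym2.eq_swap]
          exact hnoF_u a hav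
        exact hra (hreach_out a b (hnotsupp a ha.ne' hav) (hnotsupp b hb.ne' hbv))
      have huniq_v : ∀ a b, T.Adj v a → T.Adj v b → a ≠ u → b ≠ u → a = b := by
        intro a b ha hb hav hbv
        by_contra hab
        have hra : ¬ (fromEdgeSet F).Reachable a b := by
          refine not_reach_of_path hT hF (Walk.cons ha.symm (Walk.cons hb Walk.nil))
            (path2 ha.symm hb hab) (e := s(a, v)) (by simp) ?_
          rw [Sym2.eq_swap]
          exact hnoF_v a hav
        exact hra (hreach_out a b (hnotsupp a hav ha.ne') (hnotsupp b hbv hb.ne'))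
      have hmixed : ∀ a b, T.Adj u a → T.Adj v b → a ≠ v → b ≠ u → False := by
        intro a b ha hb hav hbu
        have hab : a ≠ b := by
          rintro rfl
          exact no_triangle hT huvT ha hb.symm
        have hra : ¬ (fromEdgeSet F).Reachable a b := by
          refine not_reach_of_path hT hF
            (Walk.cons ha.symm (Walk.cons huvT (Walk.cons hb Walk.nil)))
            (path3 ha.symm huvT hb hab hav (fun h => hbu h.symm)) (e := s(a, u)) (by simp) ?_
          rw [Sym2.eq_swap]
          exact hnoF_u a hav
        exact hra (hreach_out a b (hnotsupp a ha.ne' hav) (hnotsupp b hbu hb.ne'))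
      have hexists_out : (∃ a, T.Adj u a ∧ a ≠ v) ∨ (∃ b, T.Adj v b ∧ b ≠ u) := by
        by_contra hcon
        push_neg at hcon
        obtain ⟨h1, h2⟩ := hcon
        have hclosed : ∀ x ∈ ({u, v} : Set V), ∀ y, T.Adj x y → y ∈ ({u, v} : Set V) := by
          intro x hx y hxy
          rcases hx with rfl | hx
          · right; exact h1 y hxy
          · rw [Set.mem_singleton_iff] at hx; subst hx
            left; exact h2 y hxy
        have := closed_eq_univ hT hclosed (Set.mem_insert u {v})
        have hcard : ({u, v} : Set V).ncard = Fintype.card V := by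
          rw [this, Set.ncard_univ, Nat.card_eq_fintype_card]
        have h3 : ({u, v} : Set V).ncard ≤ 2 := by
          apply le_trans (Set.ncard_insert_le _ _); simp
        omega
      -- shared F-equality argument
      have Feq : ∀ p q r : V, C2.supp = {p, q} → s(p, q) ∈ F → T.neighborSet p = {q} →
          T.neighborSet q = {p, r} → r ≠ q → r ≠ p → F = T.edgeSet \ {s(q, r)} := by
        intro p q r hsupp' hpqF hNP hNQ hrq hrp
        have hpq : p ≠ q := by
          intro h
          have := pend_adj hNP
          rw [h] at this
          exact this.ne rfl
        have hnotsupp' : ∀ x, x ≠ p → x ≠ q → x ∉ C2.supp := by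
          intro x h1 h2 hx
          rw [hsupp'] at hx
          rcases hx with rfl | rfl
          · exact h1 rfl
          · exact h2 rfl
        ext e'
        simp only [Set.mem_diff, Set.mem_singleton_iff]
        constructor
        · intro he'
          refine ⟨hF he', ?_⟩
          rintro rfl
          have hqr : T.Adj q r := (mem_edgeSet T).mp (hF he')
          have hHqr : (fromEdgeSet F).Adj q r := (fromEdgeSet_adj _).mpr ⟨he', hqr.ne⟩
          have hrC : r ∈ C2.supp := by
            rw [hmem_supp]
            have hqC : (fromEdgeSet F).connectedComponentMk q = C2 := by
              rw [← hmem_supp, hsupp']; right; rfl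
            rw [← hqC]
            exact ConnectedComponent.eq.mpr ⟨hHqr.symm.toWalk⟩
          rw [hsupp'] at hrC
          rcases hrC with rfl | rfl
          · exact hrp rfl
          · exact hrq rfl
        · rintro ⟨he', hne'⟩
          induction e' with
          | h x y =>
            have hxy : T.Adj x y := (mem_edgeSet T).mp he'
            by_cases hxp : x = p
            · subst hxp
              have : y ∈ T.neighborSet x := hxy
              rw [hNP] at this
              rw [Set.mem_singleton_iff] at this
              subst this
              exact hpqF
            · by_cases hyp : y = p
              · subst hyp
                have : x ∈ T.neighborSet y := hxy.symm
                rw [hNP] at this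
                rw [Set.mem_singleton_iff] at this
                subst this
                rw [Sym2.eq_swap]
                exact hpqF
              · by_cases hxq : x = q
                · subst hxq
                  have : y ∈ T.neighborSet x := hxy
                  rw [hNQ] at this
                  rcases this with rfl | hy2
                  · exact absurd rfl hyp
                  · rw [Set.mem_singleton_iff] at hy2
                    subst hy2
                    exact absurd rfl hne'
                · by_cases hyq : y = q
                  · subst hyq
                    have : x ∈ T.neighborSet y := hxy.symm
                    rw [hNQ] at this
                    rcases this with rfl | hx2
                    · exact absurd rfl hxp
                    · rw [Set.mem_singleton_iff] at hx2
                      subst hx2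
                      rw [Sym2.eq_swap] at hne' ⊢
                      exact absurd rfl hne'
                  · -- both outside
                    refine edge_mem_of_reach hT hF hxy
                      (hreach_out x y ?_ ?_)
                    · exact hnotsupp' x hxp hxq
                    · exact hnotsupp' y hyp hyq
      by_cases hExu : ∃ a, T.Adj u a ∧ a ≠ v
      · obtain ⟨a, ha, hav⟩ := hExu
        have hNV : T.neighborSet v = {u} := by
          ext b
          simp only [mem_neighborSet, Set.mem_singleton_iff]
          constructor
          · intro hb
            by_contra hbu
            exact hmixed a b ha hb hav hbu
          · rintro rfl; exact huvT.symm
        have hNU : T.neighborSet u = {v, a} := by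
          ext c
          simp only [mem_neighborSet, Set.mem_insert_iff, Set.mem_singleton_iff]
          constructor
          · intro hc
            by_cases hcv : c = v
            · left; exact hcv
            · right; exact huniq_u c a hc ha hcv hav
          · rintro (rfl | rfl)
            · exact huvT
            · exact ha
        refine ⟨(v, u, a), ⟨hNV, hNU, ?_⟩, ?_⟩
        · exact fun h => hav h.symm
        · symm
          exact Feq v u a (by rw [hsupp, Set.pair_comm]) (by rwa [Sym2.eq_swap]) hNV hNU
            ha.ne' hav
      · push_neg at hExu
        have hEx2 : ∃ b, T.Adj v b ∧ b ≠ u := by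
          rcases hexists_out with ⟨a, ha, hav⟩ | h
          · exact absurd (hExu a ha) hav
          · exact h
        obtain ⟨b, hb, hbu⟩ := hEx2
        have hNU : T.neighborSet u = {v} := by
          ext c
          simp only [mem_neighborSet, Set.mem_singleton_iff]
          constructor
          · exact fun hc => hExu c hc
          · rintro rfl; exact huvT
        have hNV : T.neighborSet v = {u, b} := by
          ext c
          simp only [mem_neighborSet, Set.mem_insert_iff, Set.mem_singleton_iff]
          constructor
          · intro hc
            by_cases hcu : c = u
            · left; exact hcu
            · right; exact huniq_v c b hc hb hcu hbu
          · rintro (rfl | rfl)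
            · exact huvT.symm
            · exact hb
        refine ⟨(u, v, b), ⟨hNU, hNV, ?_⟩, ?_⟩
        · exact fun h => hbu h.symm
        · symm
          exact Feq u v b hsupp huvF hNU hNV hb.ne' hbu
    rcases pair_eq_nat hsz with ⟨h1, h2⟩ | ⟨h1, h2⟩
    · exact key C1 C2 hne hall h2
    · exact key C2 C1 hne.symm (fun c => (hall c).symm) h1
  · rintro F ⟨⟨u, v, w⟩, ⟨hNU, hNV, huw⟩, rfl⟩
    simp only at hNU hNV huw ⊢
    have huv : T.Adj u v := pend_adj hNU
    have hvw : T.Adj v w := by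
      have : w ∈ T.neighborSet v := by rw [hNV]; right; rfl
      exact this
    refine ⟨Set.diff_subset, ?_⟩
    have hsne : s(u, v) ≠ s(v, w) := by
      intro h
      rw [Sym2.eq_iff] at h
      rcases h with ⟨h1, -⟩ | ⟨h1, -⟩
      · exact huv.ne h1
      · exact huw h1
    have huvF : s(u, v) ∈ T.edgeSet \ {s(v, w)} := ⟨huv, hsne⟩
    have hHuv : (fromEdgeSet (T.edgeSet \ {s(v, w)})).Adj u v :=
      (fromEdgeSet_adj _).mpr ⟨huvF, huv.ne⟩
    have hclosed : ∀ x ∈ ({u, v} : Set V), ∀ y,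
        (fromEdgeSet (T.edgeSet \ {s(v, w)})).Adj x y → y ∈ ({u, v} : Set V) := by
      intro x hx y hxy
      rw [fromEdgeSet_adj] at hxy
      obtain ⟨⟨hyE, hynot⟩, hne0⟩ := hxy
      rcases hx with rfl | hx
      · have : y ∈ T.neighborSet x := (mem_edgeSet T).mp hyE
        rw [hNU] at this
        rw [Set.mem_singleton_iff] at this
        right; exact this
      · rw [Set.mem_singleton_iff] at hx; subst hx
        have : y ∈ T.neighborSet x := (mem_edgeSet T).mp hyE
        rw [hNV] at this
        rcases this with rfl | hy2
        · left; rfl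
        · rw [Set.mem_singleton_iff] at hy2
          subst hy2
          exact absurd rfl hynot
    have hsupp_u : ((fromEdgeSet (T.edgeSet \ {s(v, w)})).connectedComponentMk u).supp
        = {u, v} := by
      ext y
      rw [supp_mk_eq]
      simp only [Set.mem_setOf_eq]
      constructor
      · intro hr
        exact reach_closed hclosed (Set.mem_insert u {v}) hr.symm
      · rintro (rfl | hy)
        · exact Reachable.refl _
        · rw [Set.mem_singleton_iff] at hy; subst hy
          exact ⟨hHuv.symm.toWalk⟩
    have hcard2 : 2 < Fintype.card V := by omega
    obtain ⟨x0, hx0⟩ := exists_not_mem_pair (u := u) (v := v) hcard2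
    have hreach_out : ∀ x y : V, x ∉ ({u, v} : Set V) → y ∉ ({u, v} : Set V) →
        (fromEdgeSet (T.edgeSet \ {s(v, w)})).Reachable x y := by
      intro x y hx hy
      refine reach_of_L hT (L := {u, v}) ?_ ?_ hx hy
      · intro e' he' hnot
        refine ⟨he', ?_⟩
        intro hmem
        rw [Set.mem_singleton_iff] at hmem
        exact hnot v (Or.inr rfl) (hmem ▸ Sym2.mem_mk_left v w)
      · rintro z hz x' y' p hp hx' hy'
        have hxu : u ≠ x' := fun h => hx' (h ▸ Or.inl rfl)
        have hyu : u ≠ y' := fun h => hy' (h ▸ Or.inl rfl)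
        have hxv : v ≠ x' := fun h => hx' (h ▸ Or.inr rfl)
        have hyv : v ≠ y' := fun h => hy' (h ▸ Or.inr rfl)
        rcases hz with rfl | hz
        · exact leaf_not_interior hNU p hp hxu hyu
        · rw [Set.mem_singleton_iff] at hz; subst hz
          exact chain_not_interior hNU hNV p hp hxu hyu hxv hyv
    have hsupp_x0 : ((fromEdgeSet (T.edgeSet \ {s(v, w)})).connectedComponentMk x0).supp
        = ({u, v} : Set V)ᶜ := by
      ext y
      rw [supp_mk_eq]
      simp only [Set.mem_setOf_eq, Set.mem_compl_iff]
      constructor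
      · intro hr hy
        exact hx0 (reach_closed hclosed hy hr)
      · intro hy
        exact hreach_out y x0 hy hx0
    have hnecomp : (fromEdgeSet (T.edgeSet \ {s(v, w)})).connectedComponentMk x0
        ≠ (fromEdgeSet (T.edgeSet \ {s(v, w)})).connectedComponentMk u := by
      intro h
      have : x0 ∈ ((fromEdgeSet (T.edgeSet \ {s(v, w)})).connectedComponentMk u).supp := by
        rw [← h]; rfl
      rw [hsupp_u] at this
      exact hx0 this
    have hall : ∀ c : (fromEdgeSet (T.edgeSet \ {s(v, w)})).ConnectedComponent,
        c = (fromEdgeSet (T.edgeSet \ {s(v, w)})).connectedComponentMk x0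
        ∨ c = (fromEdgeSet (T.edgeSet \ {s(v, w)})).connectedComponentMk u := by
      intro c
      obtain ⟨v0, rfl⟩ := Quot.exists_rep c
      by_cases hv0 : v0 ∈ ({u, v} : Set V)
      · right
        rcases hv0 with rfl | hv0
        · rfl
        · rw [Set.mem_singleton_iff] at hv0; subst hv0
          exact ConnectedComponent.eq.mpr ⟨hHuv.symm.toWalk⟩
      · left
        exact ConnectedComponent.eq.mpr (hreach_out v0 x0 hv0 hx0)
    rw [compSizes_two hnecomp hall, hsupp_x0, hsupp_u, ncard_compl_pair huv.ne,
      Set.ncard_pair huv.ne, hd]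

def QASet (T : SimpleGraph V) : Set (Set (Sym2 V)) :=
  {F | ∃ e f, e ∈ PendSet T ∧ f ∈ PendSet T ∧ e ≠ f ∧ F = T.edgeSet \ {e, f}}

def QBSet (T : SimpleGraph V) : Set (Set (Sym2 V)) :=
  (fun t : V × V × V => T.edgeSet \ {s(t.1, t.2.1), s(t.2.1, t.2.2)}) '' ChainCfg T

theorem charQ {T : SimpleGraph V} (hT : T.IsTree) {d : ℕ} (hd : Fintype.card V = d)
    (hd5 : 5 ≤ d) :
    {F : Set (Sym2 V) | F ⊆ T.edgeSet ∧ compSizes (fromEdgeSet F) = {d - 2, 1, 1}}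
      = QASet T ∪ QBSet T := by
  apply Set.eq_of_subset_of_subset
  · rintro F ⟨hF, hcs⟩
    obtain ⟨C1, C2, C3, h12, h13, h23, hall, hsz⟩ := compSizes_three_inv hcs
    have key : ∀ Ca Cb Cc : (fromEdgeSet F).ConnectedComponent, Cb ≠ Cc →
        (∀ c, c = Ca ∨ c = Cb ∨ c = Cc) → Cb.supp.ncard = 1 → Cc.supp.ncard = 1 →
        F ∈ QASet T ∪ QBSet T := by
      clear h12 h13 h23 hall hsz C1 C2 C3
      intro Ca Cb Cc hbc hall hb hc
      obtain ⟨u, hu⟩ := Set.ncard_eq_one.mp hb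
      obtain ⟨v, hv⟩ := Set.ncard_eq_one.mp hc
      have hmku : (fromEdgeSet F).connectedComponentMk u = Cb := by
        have : u ∈ Cb.supp := by rw [hu]; rfl
        exact this
      have hmkv : (fromEdgeSet F).connectedComponentMk v = Cc := by
        have : v ∈ Cc.supp := by rw [hv]; rfl
        exact this
      have huv : u ≠ v := by
        rintro rfl
        exact hbc (hmku ▸ hmkv)
      have hiso_u : ∀ y, ¬ (fromEdgeSet F).Adj u y := by
        intro y hy
        have : y ∈ Cb.supp := by
          rw [← hmku]
          exact ConnectedComponent.eq.mpr ⟨hy.symm.toWalk⟩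
        rw [hu] at this
        exact hy.ne' this
      have hiso_v : ∀ y, ¬ (fromEdgeSet F).Adj v y := by
        intro y hy
        have : y ∈ Cc.supp := by
          rw [← hmkv]
          exact ConnectedComponent.eq.mpr ⟨hy.symm.toWalk⟩
        rw [hv] at this
        exact hy.ne' this
      have hnoF_u : ∀ z, s(u, z) ∉ F := by
        intro z hz
        have hadj : T.Adj u z := (mem_edgeSet T).mp (hF hz)
        exact hiso_u z ((fromEdgeSet_adj _).mpr ⟨hz, hadj.ne⟩)
      have hnoF_v : ∀ z, s(v, z) ∉ F := by
        intro z hz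
        have hadj : T.Adj v z := (mem_edgeSet T).mp (hF hz)
        exact hiso_v z ((fromEdgeSet_adj _).mpr ⟨hz, hadj.ne⟩)
      have hCx : ∀ x, x ≠ u → x ≠ v → (fromEdgeSet F).connectedComponentMk x = Ca := by
        intro x hxu hxv
        rcases hall ((fromEdgeSet F).connectedComponentMk x) with h | h | h
        · exact h
        · exfalso
          have : x ∈ Cb.supp := by rw [← h]; rfl
          rw [hu] at this
          exact hxu this
        · exfalso
          have : x ∈ Cc.supp := by rw [← h]; rfl
          rw [hv] at this
          exact hxv this
      have hreach_out : ∀ x y, x ≠ u → x ≠ v → y ≠ u → y ≠ v →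
          (fromEdgeSet F).Reachable x y := by
        intro x y h1 h2 h3 h4
        exact ConnectedComponent.eq.mp ((hCx x h1 h2).trans (hCx y h3 h4).symm)
      have huniq_u : ∀ a b, T.Adj u a → T.Adj u b → a ≠ v → b ≠ v → a = b := by
        intro a b ha hbb hav hbv
        by_contra hab
        have hra : ¬ (fromEdgeSet F).Reachable a b := by
          refine not_reach_of_path hT hF (Walk.cons ha.symm (Walk.cons hbb Walk.nil))
            (path2 ha.symm hbb hab) (e := s(a, u)) (by simp) ?_
          rw [Sym2.eq_swap]
          exact hnoF_u a
        exact hra (hreach_out a b ha.ne' hav hbb.ne' hbv)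
      have huniq_v : ∀ a b, T.Adj v a → T.Adj v b → a ≠ u → b ≠ u → a = b := by
        intro a b ha hbb hau hbu
        by_contra hab
        have hra : ¬ (fromEdgeSet F).Reachable a b := by
          refine not_reach_of_path hT hF (Walk.cons ha.symm (Walk.cons hbb Walk.nil))
            (path2 ha.symm hbb hab) (e := s(a, v)) (by simp) ?_
          rw [Sym2.eq_swap]
          exact hnoF_v a
        exact hra (hreach_out a b hau ha.ne' hbu hbb.ne')
      by_cases hadjuv : T.Adj u v
      · -- chain case
        right
        have hmixed : ∀ a b, T.Adj u a → T.Adj v b → a ≠ v → b ≠ u → False := by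
          intro a b ha hbb hav hbu
          have hab : a ≠ b := by
            rintro rfl
            exact no_triangle hT hadjuv ha hbb.symm
          have hra : ¬ (fromEdgeSet F).Reachable a b := by
            refine not_reach_of_path hT hF
              (Walk.cons ha.symm (Walk.cons hadjuv (Walk.cons hbb Walk.nil)))
              (path3 ha.symm hadjuv hbb hab hav (fun h => hbu h.symm)) (e := s(a, u))
              (by simp) ?_
            rw [Sym2.eq_swap]
            exact hnoF_u a
          exact hra (hreach_out a b ha.ne' hav hbu hbb.ne')
        have hexists_out : (∃ a, T.Adj u a ∧ a ≠ v) ∨ (∃ b, T.Adj v b ∧ b ≠ u) := by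
          by_contra hcon
          push_neg at hcon
          obtain ⟨h1, h2⟩ := hcon
          have hclosed : ∀ x ∈ ({u, v} : Set V), ∀ y, T.Adj x y → y ∈ ({u, v} : Set V) := by
            intro x hx y hxy
            rcases hx with rfl | hx
            · right; exact h1 y hxy
            · rw [Set.mem_singleton_iff] at hx; subst hx
              left; exact h2 y hxy
          have := closed_eq_univ hT hclosed (Set.mem_insert u {v})
          have hcard : ({u, v} : Set V).ncard = Fintype.card V := by
            rw [this, Set.ncard_univ, Nat.card_eq_fintype_card]
          have h3 : ({u, v} : Set V).ncard ≤ 2 := by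
            apply le_trans (Set.ncard_insert_le _ _); simp
          omega
        -- shared final argument for the chain case
        have Feq : ∀ p q r : V, T.neighborSet p = {q} → T.neighborSet q = {p, r} →
            (∀ z, s(p, z) ∉ F) → (∀ z, s(q, z) ∉ F) →
            (∀ x y, x ≠ p → x ≠ q → y ≠ p → y ≠ q → (fromEdgeSet F).Reachable x y) →
            F = T.edgeSet \ {s(p, q), s(q, r)} := by
          intro p q r hNP hNQ hnoP hnoQ hro
          ext e'
          simp only [Set.mem_diff, Set.mem_insert_iff, Set.mem_singleton_iff]
          constructor
          · intro he'
            refine ⟨hF he', ?_⟩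
            push_neg
            exact ⟨fun h => hnoP q (h ▸ he'), fun h => hnoQ r (h ▸ he')⟩
          · rintro ⟨he', hne'⟩
            push_neg at hne'
            obtain ⟨hne1, hne2⟩ := hne'
            induction e' with
            | h x y =>
              have hxy : T.Adj x y := (mem_edgeSet T).mp he'
              by_cases hxp : x = p
              · subst hxp
                have : y ∈ T.neighborSet x := hxy
                rw [hNP, Set.mem_singleton_iff] at this
                subst this
                exact absurd rfl hne1
              · by_cases hyp : y = p
                · subst hyp
                  have : x ∈ T.neighborSet y := hxy.symm
                  rw [hNP, Set.mem_singleton_iff] at this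
                  subst this
                  rw [Sym2.eq_swap] at hne1
                  exact absurd rfl hne1
                · by_cases hxq : x = q
                  · subst hxq
                    have : y ∈ T.neighborSet x := hxy
                    rw [hNQ] at this
                    rcases this with rfl | hy2
                    · exact absurd rfl hyp
                    · rw [Set.mem_singleton_iff] at hy2
                      subst hy2
                      exact absurd rfl hne2
                  · by_cases hyq : y = q
                    · subst hyq
                      have : x ∈ T.neighborSet y := hxy.symm
                      rw [hNQ] at this
                      rcases this with rfl | hx2
                      · exact absurd rfl hxp
                      · rw [Set.mem_singleton_iff] at hx2
                        subst hx2
                        rw [Sym2.eq_swap] at hne2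
                        exact absurd rfl hne2
                    · exact edge_mem_of_reach hT hF hxy (hro x y hxp hxq hyp hyq)
        by_cases hExu : ∃ a, T.Adj u a ∧ a ≠ v
        · obtain ⟨a, ha, hav⟩ := hExu
          have hNV : T.neighborSet v = {u} := by
            ext b
            simp only [mem_neighborSet, Set.mem_singleton_iff]
            constructor
            · intro hbb
              by_contra hbu
              exact hmixed a b ha hbb hav hbu
            · rintro rfl; exact hadjuv.symm
          have hNU : T.neighborSet u = {v, a} := by
            ext c
            simp only [mem_neighborSet, Set.mem_insert_iff, Set.mem_singleton_iff]
            constructor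
            · intro hcc
              by_cases hcv : c = v
              · left; exact hcv
              · right; exact huniq_u c a hcc ha hcv hav
            · rintro (rfl | rfl)
              · exact hadjuv
              · exact ha
          refine ⟨(v, u, a), ⟨hNV, hNU, fun h => hav h.symm⟩, ?_⟩
          symm
          exact Feq v u a hNV hNU hnoF_v hnoF_u
            (fun x y h1 h2 h3 h4 => hreach_out x y h2 h1 h4 h3)
        · push_neg at hExu
          have hEx2 : ∃ b, T.Adj v b ∧ b ≠ u := by
            rcases hexists_out with ⟨a, ha, hav⟩ | h
            · exact absurd (hExu a ha) hav
            · exact h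
          obtain ⟨b, hbb, hbu⟩ := hEx2
          have hNU : T.neighborSet u = {v} := by
            ext c
            simp only [mem_neighborSet, Set.mem_singleton_iff]
            constructor
            · exact fun hcc => hExu c hcc
            · rintro rfl; exact hadjuv
          have hNV : T.neighborSet v = {u, b} := by
            ext c
            simp only [mem_neighborSet, Set.mem_insert_iff, Set.mem_singleton_iff]
            constructor
            · intro hcc
              by_cases hcu : c = u
              · left; exact hcu
              · right; exact huniq_v c b hcc hbb hcu hbu
            · rintro (rfl | rfl)
              · exact hadjuv.symm
              · exact hbb
          refine ⟨(u, v, b), ⟨hNU, hNV, fun h => hbu h.symm⟩, ?_⟩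
          symm
          exact Feq u v b hNU hNV hnoF_u hnoF_v hreach_out
      · -- two leaves case
        left
        have hcard2 : 1 < Fintype.card V := by omega
        obtain ⟨xu, hxu⟩ := Fintype.exists_ne_of_one_lt_card hcard2 u
        obtain ⟨wu⟩ := hT.isConnected.preconnected u xu
        obtain ⟨a, ha, -⟩ := exists_first_edge wu (Ne.symm hxu)
        obtain ⟨xv, hxv⟩ := Fintype.exists_ne_of_one_lt_card hcard2 v
        obtain ⟨wv⟩ := hT.isConnected.preconnected v xv
        obtain ⟨b, hbb, -⟩ := exists_first_edge wv (Ne.symm hxv)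
        have hav : a ≠ v := by rintro rfl; exact hadjuv ha
        have hbu : b ≠ u := by rintro rfl; exact hadjuv hbb.symm
        have hNU : T.neighborSet u = {a} := by
          ext c
          simp only [mem_neighborSet, Set.mem_singleton_iff]
          constructor
          · intro hcc
            have hcv : c ≠ v := by rintro rfl; exact hadjuv hcc
            exact huniq_u c a hcc ha hcv hav
          · rintro rfl; exact ha
        have hNV : T.neighborSet v = {b} := by
          ext c
          simp only [mem_neighborSet, Set.mem_singleton_iff]
          constructor
          · intro hcc
            have hcu : c ≠ u := by rintro rfl; exact hadjuv hcc.symm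
            exact huniq_v c b hcc hbb hcu hbu
          · rintro rfl; exact hbb
        have hef : s(u, a) ≠ s(v, b) := by
          intro h
          rw [Sym2.eq_iff] at h
          rcases h with ⟨h1, -⟩ | ⟨h1, -⟩
          · exact huv h1
          · exact hbu h1.symm
        refine ⟨s(u, a), s(v, b), ⟨u, a, hNU, rfl⟩, ⟨v, b, hNV, rfl⟩, hef, ?_⟩
        ext e'
        simp only [Set.mem_diff, Set.mem_insert_iff, Set.mem_singleton_iff]
        constructor
        · intro he'
          refine ⟨hF he', ?_⟩
          push_neg
          exact ⟨fun h => hnoF_u a (h ▸ he'), fun h => hnoF_v b (h ▸ he')⟩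
        · rintro ⟨he', hne'⟩
          push_neg at hne'
          obtain ⟨hne1, hne2⟩ := hne'
          induction e' with
          | h x y =>
            have hxy : T.Adj x y := (mem_edgeSet T).mp he'
            by_cases hxp : x = u
            · subst hxp
              have : y ∈ T.neighborSet x := hxy
              rw [hNU, Set.mem_singleton_iff] at this
              subst this
              exact absurd rfl hne1
            · by_cases hyp : y = u
              · subst hyp
                have : x ∈ T.neighborSet y := hxy.symm
                rw [hNU, Set.mem_singleton_iff] at this
                subst this
                rw [Sym2.eq_swap] at hne1
                exact absurd rfl hne1
              · by_cases hxq : x = v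
                · subst hxq
                  have : y ∈ T.neighborSet x := hxy
                  rw [hNV, Set.mem_singleton_iff] at this
                  subst this
                  exact absurd rfl hne2
                · by_cases hyq : y = v
                  · subst hyq
                    have : x ∈ T.neighborSet y := hxy.symm
                    rw [hNV, Set.mem_singleton_iff] at this
                    subst this
                    rw [Sym2.eq_swap] at hne2
                    exact absurd rfl hne2
                  · exact edge_mem_of_reach hT hF hxy
                      (hreach_out x y hxp hxq hyp hyq)
    have hne21 : d - 2 ≠ 1 := by omega
    rcases triple_match_nat hne21 hsz with ⟨ha, hb, hc⟩ | ⟨ha, hb, hc⟩ | ⟨ha, hb, hc⟩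
    · exact key C1 C2 C3 h23 hall hb hc
    · exact key C2 C1 C3 h13 (fun c => by rcases hall c with h | h | h <;> tauto) hb hc
    · exact key C3 C1 C2 h12 (fun c => by rcases hall c with h | h | h <;> tauto) hb hc
  · rintro F (⟨e, f, ⟨u1, w1, hN1, rfl⟩, ⟨u2, w2, hN2, rfl⟩, hef, rfl⟩ | hFB)
    · -- QA backward
      have h1 : T.Adj u1 w1 := pend_adj hN1
      have h2 : T.Adj u2 w2 := pend_adj hN2
      have hu12 : u1 ≠ u2 := by
        rintro rfl
        rw [hN1] at hN2
        have : w1 = w2 := by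
          have : w2 ∈ ({w1} : Set V) := by rw [hN2]; rfl
          exact this.symm
        exact hef (by rw [this])
      refine ⟨Set.diff_subset, ?_⟩
      have hiso1 : ∀ y, ¬ (fromEdgeSet (T.edgeSet \ {s(u1, w1), s(u2, w2)})).Adj u1 y := by
        intro y hy
        rw [fromEdgeSet_adj] at hy
        obtain ⟨⟨hyE, hynot⟩, -⟩ := hy
        have : y ∈ T.neighborSet u1 := (mem_edgeSet T).mp hyE
        rw [hN1, Set.mem_singleton_iff] at this
        subst this
        exact hynot (Or.inl rfl)
      have hiso2 : ∀ y, ¬ (fromEdgeSet (T.edgeSet \ {s(u1, w1), s(u2, w2)})).Adj u2 y := by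
        intro y hy
        rw [fromEdgeSet_adj] at hy
        obtain ⟨⟨hyE, hynot⟩, -⟩ := hy
        have : y ∈ T.neighborSet u2 := (mem_edgeSet T).mp hyE
        rw [hN2, Set.mem_singleton_iff] at this
        subst this
        exact hynot (Or.inr rfl)
      have hcard2 : 2 < Fintype.card V := by omega
      obtain ⟨x0, hx0⟩ := exists_not_mem_pair (u := u1) (v := u2) hcard2
      have hx01 : x0 ≠ u1 := fun h => hx0 (h ▸ Or.inl rfl)
      have hx02 : x0 ≠ u2 := fun h => hx0 (h ▸ Or.inr rfl)
      have hreach_out : ∀ x y : V, x ≠ u1 → x ≠ u2 → y ≠ u1 → y ≠ u2 →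
          (fromEdgeSet (T.edgeSet \ {s(u1, w1), s(u2, w2)})).Reachable x y := by
        intro x y ha1 ha2 hb1 hb2
        refine reach_of_L hT (L := {u1, u2}) ?_ ?_ ?_ ?_
        · intro e' he' hnot
          refine ⟨he', ?_⟩
          rintro (hmem | hmem)
          · exact hnot u1 (Or.inl rfl) (hmem ▸ Sym2.mem_mk_left u1 w1)
          · exact hnot u2 (Or.inr rfl) (hmem ▸ Sym2.mem_mk_left u2 w2)
        · rintro z hz x' y' p hp hx' hy'
          have ha : u1 ≠ x' := fun h => hx' (h ▸ Or.inl rfl)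
          have hb : u1 ≠ y' := fun h => hy' (h ▸ Or.inl rfl)
          have hc : u2 ≠ x' := fun h => hx' (h ▸ Or.inr rfl)
          have hdd : u2 ≠ y' := fun h => hy' (h ▸ Or.inr rfl)
          rcases hz with rfl | hz
          · exact leaf_not_interior hN1 p hp ha hb
          · rw [Set.mem_singleton_iff] at hz; subst hz
            exact leaf_not_interior hN2 p hp hc hdd
        · rintro (h | h)
          · exact ha1 h
          · exact ha2 (Set.mem_singleton_iff.mp h)
        · rintro (h | h)
          · exact hb1 h
          · exact hb2 (Set.mem_singleton_iff.mp h)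
      have hsupp1 : ((fromEdgeSet (T.edgeSet \ {s(u1, w1), s(u2, w2)})).connectedComponentMk
          u1).supp = {u1} := isolated_supp hiso1
      have hsupp2 : ((fromEdgeSet (T.edgeSet \ {s(u1, w1), s(u2, w2)})).connectedComponentMk
          u2).supp = {u2} := isolated_supp hiso2
      have hsupp0 : ((fromEdgeSet (T.edgeSet \ {s(u1, w1), s(u2, w2)})).connectedComponentMk
          x0).supp = ({u1, u2} : Set V)ᶜ := by
        ext y
        rw [supp_mk_eq]
        simp only [Set.mem_setOf_eq, Set.mem_compl_iff]
        constructor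
        · intro hr
          rintro (h | h)
          · have hr2 : (fromEdgeSet (T.edgeSet \ {s(u1, w1), s(u2, w2)})).Reachable u1 x0 := by rw [h] at hr; exact hr
            exact hx01 (reach_from_isolated hiso1 hr2)
          · have hr2 : (fromEdgeSet (T.edgeSet \ {s(u1, w1), s(u2, w2)})).Reachable u2 x0 := by rw [h] at hr; exact hr
            exact hx02 (reach_from_isolated hiso2 hr2)
        · intro hy
          have hy1 : y ≠ u1 := fun h => hy (h ▸ Or.inl rfl)
          have hy2 : y ≠ u2 := fun h => hy (h ▸ Or.inr rfl)
          exact hreach_out y x0 hy1 hy2 hx01 hx02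
      have hd01 : (fromEdgeSet (T.edgeSet \ {s(u1, w1), s(u2, w2)})).connectedComponentMk x0
          ≠ (fromEdgeSet (T.edgeSet \ {s(u1, w1), s(u2, w2)})).connectedComponentMk u1 := by
        intro h
        have : x0 ∈ ((fromEdgeSet (T.edgeSet \ {s(u1, w1), s(u2, w2)})).connectedComponentMk
            u1).supp := by rw [← h]; rfl
        rw [hsupp1] at this
        exact hx01 this
      have hd02 : (fromEdgeSet (T.edgeSet \ {s(u1, w1), s(u2, w2)})).connectedComponentMk x0
          ≠ (fromEdgeSet (T.edgeSet \ {s(u1, w1), s(u2, w2)})).connectedComponentMk u2 := by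
        intro h
        have : x0 ∈ ((fromEdgeSet (T.edgeSet \ {s(u1, w1), s(u2, w2)})).connectedComponentMk
            u2).supp := by rw [← h]; rfl
        rw [hsupp2] at this
        exact hx02 this
      have hd12 : (fromEdgeSet (T.edgeSet \ {s(u1, w1), s(u2, w2)})).connectedComponentMk u1
          ≠ (fromEdgeSet (T.edgeSet \ {s(u1, w1), s(u2, w2)})).connectedComponentMk u2 := by
        intro h
        have : u1 ∈ ((fromEdgeSet (T.edgeSet \ {s(u1, w1), s(u2, w2)})).connectedComponentMk
            u2).supp := by rw [← h]; rfl
        rw [hsupp2] at this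
        exact hu12 (by simpa using this)
      have hall : ∀ c : (fromEdgeSet (T.edgeSet \ {s(u1, w1), s(u2, w2)})).ConnectedComponent,
          c = (fromEdgeSet (T.edgeSet \ {s(u1, w1), s(u2, w2)})).connectedComponentMk x0
          ∨ c = (fromEdgeSet (T.edgeSet \ {s(u1, w1), s(u2, w2)})).connectedComponentMk u1
          ∨ c = (fromEdgeSet (T.edgeSet \ {s(u1, w1), s(u2, w2)})).connectedComponentMk u2 := by
        intro c
        obtain ⟨v0, rfl⟩ := Quot.exists_rep c
        by_cases hv1 : v0 = u1
        · right; left; subst hv1; rfl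
        · by_cases hv2 : v0 = u2
          · right; right; subst hv2; rfl
          · left
            exact ConnectedComponent.eq.mpr (hreach_out v0 x0 hv1 hv2 hx01 hx02)
      rw [compSizes_three hd01 hd02 hd12 hall, hsupp0, hsupp1, hsupp2,
        ncard_compl_pair hu12, hd, Set.ncard_singleton, Set.ncard_singleton]
    · -- QB backward
      obtain ⟨⟨u, v, w⟩, ⟨hNU, hNV, huw⟩, rfl⟩ := hFB
      simp only at hNU hNV huw ⊢
      have huv : T.Adj u v := pend_adj hNU
      have hvw : T.Adj v w := by
        have : w ∈ T.neighborSet v := by rw [hNV]; right; rfl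
        exact this
      refine ⟨Set.diff_subset, ?_⟩
      have hiso_u : ∀ y, ¬ (fromEdgeSet (T.edgeSet \ {s(u, v), s(v, w)})).Adj u y := by
        intro y hy
        rw [fromEdgeSet_adj] at hy
        obtain ⟨⟨hyE, hynot⟩, -⟩ := hy
        have : y ∈ T.neighborSet u := (mem_edgeSet T).mp hyE
        rw [hNU, Set.mem_singleton_iff] at this
        subst this
        exact hynot (Or.inl rfl)
      have hiso_v : ∀ y, ¬ (fromEdgeSet (T.edgeSet \ {s(u, v), s(v, w)})).Adj v y := by
        intro y hy
        rw [fromEdgeSet_adj] at hy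
        obtain ⟨⟨hyE, hynot⟩, -⟩ := hy
        have : y ∈ T.neighborSet v := (mem_edgeSet T).mp hyE
        rw [hNV] at this
        rcases this with rfl | hy2
        · exact hynot (Or.inl (Sym2.eq_swap))
        · rw [Set.mem_singleton_iff] at hy2
          subst hy2
          exact hynot (Or.inr rfl)
      have hcard2 : 2 < Fintype.card V := by omega
      obtain ⟨x0, hx0⟩ := exists_not_mem_pair (u := u) (v := v) hcard2
      have hx01 : x0 ≠ u := fun h => hx0 (h ▸ Or.inl rfl)
      have hx02 : x0 ≠ v := fun h => hx0 (h ▸ Or.inr rfl)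
      have hreach_out : ∀ x y : V, x ≠ u → x ≠ v → y ≠ u → y ≠ v →
          (fromEdgeSet (T.edgeSet \ {s(u, v), s(v, w)})).Reachable x y := by
        intro x y ha1 ha2 hb1 hb2
        refine reach_of_L hT (L := {u, v}) ?_ ?_ ?_ ?_
        · intro e' he' hnot
          refine ⟨he', ?_⟩
          rintro (hmem | hmem)
          · exact hnot u (Or.inl rfl) (hmem ▸ Sym2.mem_mk_left u v)
          · exact hnot v (Or.inr rfl) (hmem ▸ Sym2.mem_mk_left v w)
        · rintro z hz x' y' p hp hx' hy'
          have ha : u ≠ x' := fun h => hx' (h ▸ Or.inl rfl)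
          have hb : u ≠ y' := fun h => hy' (h ▸ Or.inl rfl)
          have hc : v ≠ x' := fun h => hx' (h ▸ Or.inr rfl)
          have hdd : v ≠ y' := fun h => hy' (h ▸ Or.inr rfl)
          rcases hz with rfl | hz
          · exact leaf_not_interior hNU p hp ha hb
          · rw [Set.mem_singleton_iff] at hz; subst hz
            exact chain_not_interior hNU hNV p hp ha hb hc hdd
        · rintro (h | h)
          · exact ha1 h
          · exact ha2 (Set.mem_singleton_iff.mp h)
        · rintro (h | h)
          · exact hb1 h
          · exact hb2 (Set.mem_singleton_iff.mp h)
      have hsupp1 : ((fromEdgeSet (T.edgeSet \ {s(u, v), s(v, w)})).connectedComponentMk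
          u).supp = {u} := isolated_supp hiso_u
      have hsupp2 : ((fromEdgeSet (T.edgeSet \ {s(u, v), s(v, w)})).connectedComponentMk
          v).supp = {v} := isolated_supp hiso_v
      have hsupp0 : ((fromEdgeSet (T.edgeSet \ {s(u, v), s(v, w)})).connectedComponentMk
          x0).supp = ({u, v} : Set V)ᶜ := by
        ext y
        rw [supp_mk_eq]
        simp only [Set.mem_setOf_eq, Set.mem_compl_iff]
        constructor
        · intro hr
          rintro (h | h)
          · have hr2 : (fromEdgeSet (T.edgeSet \ {s(u, v), s(v, w)})).Reachable u x0 := by rw [h] at hr; exact hr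
            exact hx01 (reach_from_isolated hiso_u hr2)
          · have hr2 : (fromEdgeSet (T.edgeSet \ {s(u, v), s(v, w)})).Reachable v x0 := by rw [h] at hr; exact hr
            exact hx02 (reach_from_isolated hiso_v hr2)
        · intro hy
          have hy1 : y ≠ u := fun h => hy (h ▸ Or.inl rfl)
          have hy2 : y ≠ v := fun h => hy (h ▸ Or.inr rfl)
          exact hreach_out y x0 hy1 hy2 hx01 hx02
      have hd01 : (fromEdgeSet (T.edgeSet \ {s(u, v), s(v, w)})).connectedComponentMk x0
          ≠ (fromEdgeSet (T.edgeSet \ {s(u, v), s(v, w)})).connectedComponentMk u := by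
        intro h
        have : x0 ∈ ((fromEdgeSet (T.edgeSet \ {s(u, v), s(v, w)})).connectedComponentMk
            u).supp := by rw [← h]; rfl
        rw [hsupp1] at this
        exact hx01 this
      have hd02 : (fromEdgeSet (T.edgeSet \ {s(u, v), s(v, w)})).connectedComponentMk x0
          ≠ (fromEdgeSet (T.edgeSet \ {s(u, v), s(v, w)})).connectedComponentMk v := by
        intro h
        have : x0 ∈ ((fromEdgeSet (T.edgeSet \ {s(u, v), s(v, w)})).connectedComponentMk
            v).supp := by rw [← h]; rfl
        rw [hsupp2] at this
        exact hx02 this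
      have hd12 : (fromEdgeSet (T.edgeSet \ {s(u, v), s(v, w)})).connectedComponentMk u
          ≠ (fromEdgeSet (T.edgeSet \ {s(u, v), s(v, w)})).connectedComponentMk v := by
        intro h
        have : u ∈ ((fromEdgeSet (T.edgeSet \ {s(u, v), s(v, w)})).connectedComponentMk
            v).supp := by rw [← h]; rfl
        rw [hsupp2] at this
        exact huv.ne (by simpa using this)
      have hall : ∀ c : (fromEdgeSet (T.edgeSet \ {s(u, v), s(v, w)})).ConnectedComponent,
          c = (fromEdgeSet (T.edgeSet \ {s(u, v), s(v, w)})).connectedComponentMk x0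
          ∨ c = (fromEdgeSet (T.edgeSet \ {s(u, v), s(v, w)})).connectedComponentMk u
          ∨ c = (fromEdgeSet (T.edgeSet \ {s(u, v), s(v, w)})).connectedComponentMk v := by
        intro c
        obtain ⟨v0, rfl⟩ := Quot.exists_rep c
        by_cases hv1 : v0 = u
        · right; left; subst hv1; rfl
        · by_cases hv2 : v0 = v
          · right; right; subst hv2; rfl
          · left
            exact ConnectedComponent.eq.mpr (hreach_out v0 x0 hv1 hv2 hx01 hx02)
      rw [compSizes_three hd01 hd02 hd12 hall, hsupp0, hsupp1, hsupp2,
        ncard_compl_pair huv.ne, hd, Set.ncard_singleton, Set.ncard_singleton]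

lemma card_eq_ncard_closed {T : SimpleGraph V} (hT : T.IsTree) {S : Set V}
    (hS : ∀ x ∈ S, ∀ y, T.Adj x y → y ∈ S) {x0 : V} (hx0 : x0 ∈ S) :
    Fintype.card V = S.ncard := by
  rw [closed_eq_univ hT hS hx0, Set.ncard_univ, Nat.card_eq_fintype_card]

lemma tri_impossible {T : SimpleGraph V} (hT : T.IsTree) (hd5 : 5 ≤ Fintype.card V)
    {u1 u2 v : V} (hNU1 : T.neighborSet u1 = {v}) (hNU2 : T.neighborSet u2 = {v})
    (hNV : T.neighborSet v = {u1, u2}) : False := by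
  have hcl : ∀ x ∈ ({u1, u2, v} : Set V), ∀ y, T.Adj x y → y ∈ ({u1, u2, v} : Set V) := by
    rintro x (rfl | rfl | rfl) y hxy
    · have : y ∈ T.neighborSet x := hxy
      rw [hNU1, Set.mem_singleton_iff] at this
      right; right; exact this
    · have : y ∈ T.neighborSet x := hxy
      rw [hNU2, Set.mem_singleton_iff] at this
      right; right; exact this
    · have : y ∈ T.neighborSet x := hxy
      rw [hNV] at this
      rcases this with rfl | h
      · left; rfl
      · right; left; exact h
  have hcard := card_eq_ncard_closed hT hcl (Or.inl rfl)
  have hle : ({u1, u2, v} : Set V).ncard ≤ 3 := by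
    refine le_trans (Set.ncard_insert_le _ _) ?_
    refine Nat.add_le_add_right ?_ 1
    refine le_trans (Set.ncard_insert_le _ _) ?_
    simp
  omega

lemma cross_impossible {T : SimpleGraph V} (hT : T.IsTree) (hd5 : 5 ≤ Fintype.card V)
    {u1 v1 u2 v2 : V} (hNU1 : T.neighborSet u1 = {v1}) (hNU2 : T.neighborSet u2 = {v2})
    (hNV1 : T.neighborSet v1 = {u1, v2}) (hNV2 : T.neighborSet v2 = {u2, v1}) : False := by
  have hcl : ∀ x ∈ ({u1, u2, v1, v2} : Set V), ∀ y, T.Adj x y →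
      y ∈ ({u1, u2, v1, v2} : Set V) := by
    rintro x (rfl | rfl | rfl | rfl) y hxy
    · have : y ∈ T.neighborSet x := hxy
      rw [hNU1, Set.mem_singleton_iff] at this
      right; right; left; exact this
    · have : y ∈ T.neighborSet x := hxy
      rw [hNU2, Set.mem_singleton_iff] at this
      right; right; right; exact this
    · have : y ∈ T.neighborSet x := hxy
      rw [hNV1] at this
      rcases this with rfl | h
      · left; rfl
      · right; right; right; exact h
    · have : y ∈ T.neighborSet x := hxy
      rw [hNV2] at this
      rcases this with rfl | h
      · right; left; rfl
      · right; right; left; exact h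
  have hcard := card_eq_ncard_closed hT hcl (Or.inl rfl)
  have hle : ({u1, u2, v1, v2} : Set V).ncard ≤ 4 := by
    refine le_trans (Set.ncard_insert_le _ _) ?_
    refine Nat.add_le_add_right ?_ 1
    refine le_trans (Set.ncard_insert_le _ _) ?_
    refine Nat.add_le_add_right ?_ 1
    refine le_trans (Set.ncard_insert_le _ _) ?_
    simp
  omega

lemma chain_eq_of {T : SimpleGraph V} (hT : T.IsTree) (hd5 : 5 ≤ Fintype.card V)
    {t1 t2 : V × V × V} (h1 : t1 ∈ ChainCfg T) (h2 : t2 ∈ ChainCfg T)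
    (he : s(t1.2.1, t1.2.2) = s(t2.2.1, t2.2.2)) : t1 = t2 := by
  obtain ⟨u1, v1, w1⟩ := t1
  obtain ⟨u2, v2, w2⟩ := t2
  obtain ⟨hNU1, hNV1, hne1⟩ := h1
  obtain ⟨hNU2, hNV2, hne2⟩ := h2
  simp only at hNU1 hNV1 hne1 hNU2 hNV2 hne2 he ⊢
  rw [Sym2.eq_iff] at he
  rcases he with ⟨hv, hw⟩ | ⟨hvw, hwv⟩
  · subst hv; subst hw
    have hu : u1 = u2 := by
      have h1' : u1 ∈ T.neighborSet v1 := by rw [hNV1]; left; rfl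
      rw [hNV2] at h1'
      rcases h1' with h | h
      · exact h
      · rw [Set.mem_singleton_iff] at h
        exact absurd h hne1
    subst hu
    rfl
  · exfalso
    -- v1 = w2, w1 = v2
    subst hvw; subst hwv
    -- NV1 : nbr v1 = {u1, w1}; NV2 : nbr w1 = {u2, v1}
    exact cross_impossible hT hd5 hNU1 hNU2 hNV1 hNV2

lemma pair_set_cases {α : Type*} {a b c d : α} (h : ({a, b} : Set α) = {c, d}) :
    (a = c ∧ b = d) ∨ (a = d ∧ b = c) := by
  have ha : a ∈ ({c, d} : Set α) := h ▸ Or.inl rfl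
  have hb : b ∈ ({c, d} : Set α) := h ▸ Or.inr rfl
  have hc : c ∈ ({a, b} : Set α) := h ▸ Or.inl rfl
  have hd : d ∈ ({a, b} : Set α) := h ▸ Or.inr rfl
  simp only [Set.mem_insert_iff, Set.mem_singleton_iff] at ha hb hc hd
  rcases ha with ha | ha
  · rcases hd with hd | hd
    · rcases hb with hb | hb
      · exact Or.inl ⟨ha, hb.trans (ha.symm.trans hd.symm)⟩
      · exact Or.inl ⟨ha, hb⟩
    · exact Or.inl ⟨ha, hd.symm⟩
  · rcases hc with hc | hc
    · rcases hb with hb | hb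
      · exact Or.inl ⟨hc.symm, hb.trans (hc.trans ha)⟩
      · exact Or.inl ⟨hc.symm, hb⟩
    · exact Or.inr ⟨ha, hc.symm⟩

lemma chain_edge_mem {T : SimpleGraph V} {t : V × V × V} (h : t ∈ ChainCfg T) :
    s(t.2.1, t.2.2) ∈ T.edgeSet := by
  obtain ⟨-, hNV, -⟩ := h
  have : t.2.2 ∈ T.neighborSet t.2.1 := by rw [hNV]; right; rfl
  exact this

lemma chain_edge_mem' {T : SimpleGraph V} {t : V × V × V} (h : t ∈ ChainCfg T) :
    s(t.1, t.2.1) ∈ T.edgeSet := by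
  obtain ⟨hNU, -, -⟩ := h
  exact pend_adj hNU

lemma ncard_Q1 {T : SimpleGraph V} :
    ((fun e => T.edgeSet \ {e}) '' PendSet T).ncard = (PendSet T).ncard := by
  apply Set.ncard_image_of_injOn
  intro e1 h1 e2 h2 he
  dsimp only at he
  have k1 : T.edgeSet \ (T.edgeSet \ {e1}) = {e1} :=
    Set.diff_diff_cancel_left (Set.singleton_subset_iff.mpr (pendSet_subset h1))
  have k2 : T.edgeSet \ (T.edgeSet \ {e2}) = {e2} :=
    Set.diff_diff_cancel_left (Set.singleton_subset_iff.mpr (pendSet_subset h2))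
  rw [he] at k1
  rw [k2] at k1
  exact (Set.singleton_eq_singleton_iff.mp k1).symm

lemma ncard_Q2 {T : SimpleGraph V} (hT : T.IsTree) (hd5 : 5 ≤ Fintype.card V) :
    ((fun t : V × V × V => T.edgeSet \ {s(t.2.1, t.2.2)}) '' ChainCfg T).ncard
      = (ChainCfg T).ncard := by
  apply Set.ncard_image_of_injOn
  intro t1 h1 t2 h2 he
  dsimp only at he
  have k1 : T.edgeSet \ (T.edgeSet \ {s(t1.2.1, t1.2.2)}) = {s(t1.2.1, t1.2.2)} :=
    Set.diff_diff_cancel_left (Set.singleton_subset_iff.mpr (chain_edge_mem h1))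
  have k2 : T.edgeSet \ (T.edgeSet \ {s(t2.2.1, t2.2.2)}) = {s(t2.2.1, t2.2.2)} :=
    Set.diff_diff_cancel_left (Set.singleton_subset_iff.mpr (chain_edge_mem h2))
  rw [he] at k1
  rw [k2] at k1
  exact chain_eq_of hT hd5 h1 h2 (Set.singleton_eq_singleton_iff.mp k1).symm

lemma ncard_QB {T : SimpleGraph V} (hT : T.IsTree) (hd5 : 5 ≤ Fintype.card V) :
    (QBSet T).ncard = (ChainCfg T).ncard := by
  apply Set.ncard_image_of_injOn
  intro t1 h1 t2 h2 he
  dsimp only at he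
  have hsub1 : ({s(t1.1, t1.2.1), s(t1.2.1, t1.2.2)} : Set (Sym2 V)) ⊆ T.edgeSet := by
    rintro e (rfl | rfl)
    · exact chain_edge_mem' h1
    · exact chain_edge_mem h1
  have hsub2 : ({s(t2.1, t2.2.1), s(t2.2.1, t2.2.2)} : Set (Sym2 V)) ⊆ T.edgeSet := by
    rintro e (rfl | rfl)
    · exact chain_edge_mem' h2
    · exact chain_edge_mem h2
  have k1 := Set.diff_diff_cancel_left hsub1
  have k2 := Set.diff_diff_cancel_left hsub2
  rw [he, k2] at k1
  -- k1 : pair2 = pair1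
  rcases pair_set_cases k1 with ⟨-, hb⟩ | ⟨ha, hb⟩
  · exact chain_eq_of hT hd5 h2 h1 hb |>.symm
  · exfalso
    obtain ⟨u1, v1, w1⟩ := t1
    obtain ⟨u2, v2, w2⟩ := t2
    obtain ⟨hNU1, hNV1, hne1⟩ := h1
    obtain ⟨hNU2, hNV2, hne2⟩ := h2
    simp only at hNU1 hNV1 hne1 hNU2 hNV2 hne2 ha hb
    -- ha : s(u2, v2) = s(v1, w1), hb : s(v2, w2) = s(u1, v1)
    rw [Sym2.eq_iff] at ha hb
    rcases hb with ⟨hb1, hb2⟩ | ⟨hb1, hb2⟩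
    · -- hb1 : v2 = u1, hb2 : w2 = v1
      have hx : T.neighborSet u1 = {u2, w2} := hb1 ▸ hNV2
      rw [hNU1] at hx
      have h1' : u2 ∈ ({v1} : Set V) := by rw [hx]; left; rfl
      have h2' : w2 ∈ ({v1} : Set V) := by rw [hx]; right; rfl
      rw [Set.mem_singleton_iff] at h1' h2'
      exact hne2 (h1'.trans h2'.symm)
    · -- hb1 : v2 = v1, hb2 : w2 = u1
      have hNV2' : T.neighborSet v1 = {u2, w2} := hb1 ▸ hNV2
      have hw1 : w1 ∈ ({u2, w2} : Set V) := by
        rw [← hNV2', hNV1]; right; rfl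
      rcases hw1 with hw1 | hw1
      · have hNU2' : T.neighborSet w1 = {v1} := by
          rw [hw1, hNU2, hb1]
        exact tri_impossible hT hd5 hNU1 hNU2' hNV1
      · rw [Set.mem_singleton_iff] at hw1
        exact hne1 (hw1.trans hb2).symm

lemma ncard_QA {T : SimpleGraph V} : (QASet T).ncard = ((PendSet T).ncard).choose 2 := by
  classical
  have hfin : (PendSet T).Finite := Set.toFinite _
  have himg : QASet T = (fun s : Finset (Sym2 V) => T.edgeSet \ ↑s) ''
      ↑(Finset.powersetCard 2 hfin.toFinset) := by
    ext F
    constructor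
    · rintro ⟨e, f, he, hf, hef, rfl⟩
      refine ⟨{e, f}, ?_, by simp⟩
      rw [Finset.mem_coe, Finset.mem_powersetCard]
      constructor
      · intro x hx
        rcases Finset.mem_insert.mp hx with rfl | hx
        · exact hfin.mem_toFinset.mpr he
        · rw [Finset.mem_singleton] at hx
          subst hx
          exact hfin.mem_toFinset.mpr hf
      · exact Finset.card_pair hef
    · rintro ⟨s, hs, rfl⟩
      rw [Finset.mem_coe, Finset.mem_powersetCard] at hs
      obtain ⟨hsub, hcard⟩ := hs
      obtain ⟨e, f, hef, rfl⟩ := Finset.card_eq_two.mp hcard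
      refine ⟨e, f, ?_, ?_, hef, by simp⟩
      · exact hfin.mem_toFinset.mp (hsub (Finset.mem_insert_self _ _))
      · exact hfin.mem_toFinset.mp (hsub (by simp))
  rw [himg, Set.ncard_image_of_injOn, Set.ncard_coe_finset, Finset.card_powersetCard]
  · congr 1
    rw [Set.ncard_eq_toFinset_card _ hfin]
  · intro s1 h1 s2 h2 he
    dsimp only at he
    rw [Finset.mem_coe, Finset.mem_powersetCard] at h1 h2
    have hsub1 : (↑s1 : Set (Sym2 V)) ⊆ T.edgeSet := by
      intro x hx
      exact pendSet_subset (hfin.mem_toFinset.mp (h1.1 hx))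
    have hsub2 : (↑s2 : Set (Sym2 V)) ⊆ T.edgeSet := by
      intro x hx
      exact pendSet_subset (hfin.mem_toFinset.mp (h2.1 hx))
    have k1 := Set.diff_diff_cancel_left hsub1
    have k2 := Set.diff_diff_cancel_left hsub2
    rw [he, k2] at k1
    exact Finset.coe_injective k1.symm

lemma QA_QB_disjoint {T : SimpleGraph V} (hT : T.IsTree) (hd5 : 5 ≤ Fintype.card V) :
    Disjoint (QASet T) (QBSet T) := by
  rw [Set.disjoint_left]
  rintro F ⟨e, f, he, hf, hef, rfl⟩ ⟨⟨u, v, w⟩, ⟨hNU, hNV, huw⟩, hFeq⟩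
  simp only at hNU hNV huw hFeq
  have hsub1 : ({e, f} : Set (Sym2 V)) ⊆ T.edgeSet := by
    rintro x (rfl | rfl)
    · exact pendSet_subset he
    · exact pendSet_subset hf
  have hsub2 : ({s(u, v), s(v, w)} : Set (Sym2 V)) ⊆ T.edgeSet := by
    rintro x (rfl | rfl)
    · exact pend_adj hNU
    · have : w ∈ T.neighborSet v := by rw [hNV]; right; rfl
      exact this
  have k1 := Set.diff_diff_cancel_left hsub1
  have k2 := Set.diff_diff_cancel_left hsub2
  rw [hFeq, k1] at k2
  -- k2 : {s(u,v), s(v,w)} = {e, f}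
  have hvw_pend : s(v, w) ∈ PendSet T := by
    have hmem : s(v, w) ∈ ({e, f} : Set (Sym2 V)) := by rw [k2]; right; rfl
    rcases hmem with h | h
    · rw [h]; exact he
    · rw [Set.mem_singleton_iff] at h
      rw [h]; exact hf
  obtain ⟨x, y, hNx, hxy⟩ := hvw_pend
  rw [Sym2.eq_iff] at hxy
  rcases hxy with ⟨hx1, hy1⟩ | ⟨hx1, hy1⟩
  · -- v = x, w = y : nbr v = {w}
    have hNv : T.neighborSet v = {w} := by rw [← hx1, ← hy1] at hNx; exact hNx
    rw [hNV] at hNv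
    have : u ∈ ({w} : Set V) := by rw [← hNv]; left; rfl
    rw [Set.mem_singleton_iff] at this
    exact huw this
  · -- v = y, w = x : nbr w = {v}
    have hNw : T.neighborSet w = {v} := by rw [← hy1, ← hx1] at hNx; exact hNx
    exact tri_impossible hT hd5 hNU hNw hNV


/-- `IsRootedSubtree T e v R r` says: `e` is an edge of `T`, `v` is an endpoint of `e`,
and the connected component of `v` after deleting `e`, rooted at `v`, is isomorphic to
the rooted tree `(R, r)` via a graph isomorphism sending root to root. -/
def IsRootedSubtree {V W : Type} (T : SimpleGraph V) (e : Sym2 V) (v : V)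
    (R : SimpleGraph W) (r : W) : Prop :=
  e ∈ T.edgeSet ∧ v ∈ e ∧
  ∃ φ : R ≃g (T.deleteEdges {e}).induce ((T.deleteEdges {e}).connectedComponentMk v).supp,
    (φ r : V) = v

/-- `rho T R r` is the number of rooted subtrees of `T` isomorphic to the rooted tree
`(R, r)`, counted over all pairs (edge `e`, endpoint `v` of `e`). -/
noncomputable def rho {V W : Type} [Fintype V] (T : SimpleGraph V)
    (R : SimpleGraph W) (r : W) : ℕ :=
  Set.ncard {p : Sym2 V × V | IsRootedSubtree T p.1 p.2 R r}

/-- The number of leaves (vertices of degree one) of a graph. -/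
noncomputable def leafCount {V : Type} [Fintype V] (G : SimpleGraph V) : ℕ :=
  Set.ncard {v : V | (G.neighborSet v).ncard = 1}

/-- The rooted tree `R_{n,2}` (for `n ≥ 3`): the path `0 - 1 - ⋯ - (n-2)` rooted at the
leaf `0`, together with an extra leaf `n-1` attached to the second outward-most vertex
`n-3` from the root.  (`R_{n,1}` is `SimpleGraph.pathGraph n` rooted at the leaf `0`.) -/
def Rtwo (n : ℕ) : SimpleGraph (Fin n) :=
  SimpleGraph.fromRel fun i j =>
    (j.val = i.val + 1 ∧ j.val ≤ n - 2) ∨ (i.val = n - 3 ∧ j.val = n - 1)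

/-- For a tree `T` of order `d ≥ 5`, `c_{1,1}(T) = C(c₁(T), 2) + c₂(T)`. -/
theorem c11_formula {V : Type} [Fintype V] (T : SimpleGraph V) (hT : T.IsTree)
    (d : ℕ) (hd : Fintype.card V = d) (hd5 : 5 ≤ d) :
    cCoeff T {d - 2, 1, 1} = Nat.choose (cCoeff T {d - 1, 1}) 2 + cCoeff T {d - 2, 2} := by
  have hd5' : 5 ≤ Fintype.card V := by omega
  have e1 : cCoeff T {d - 1, 1} = (PendSet T).ncard := by
    unfold cCoeff
    rw [charQ1 hT hd hd5, ncard_Q1]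
  have e2 : cCoeff T {d - 2, 2} = (ChainCfg T).ncard := by
    unfold cCoeff
    rw [charQ2 hT hd hd5, ncard_Q2 hT hd5']
  have e3 : cCoeff T {d - 2, 1, 1} = ((PendSet T).ncard).choose 2 + (ChainCfg T).ncard := by
    unfold cCoeff
    rw [charQ hT hd hd5,
      Set.ncard_union_eq (QA_QB_disjoint hT hd5') (Set.toFinite _) (Set.toFinite _),
      ncard_QA, ncard_QB hT hd5']
  rw [e1, e2, e3]
end

section
/- Let T be a 2-spider of order d such that every leg of T has order at most d/2 and such that it is not the case that T has exactly three legs with two of them of order one. Then for all integers i, j with 3 ≤ i < j < d/2, we have c_i(T) ≥ c_j(T). -/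
open SimpleGraph

/-- The order of the "leg" of `T` at `u` hanging off the vertex `t`: the number of vertices
of the connected component of `u` after deleting the edge `{t, u}`. -/
noncomputable def legOrder {V : Type} (T : SimpleGraph V) (t u : V) : ℕ :=
  ((T.deleteEdges {s(t, u)}).connectedComponentMk u).supp.ncard

/-- The leg of `T` at `u` (hanging off `t`) is a 1-leg: the component of `u` in `T − t`,
rooted at `u`, is isomorphic to some `R_{n,1}`, i.e. a path rooted at a leaf. -/
def IsOneLegAt {V : Type} (T : SimpleGraph V) (t u : V) : Prop :=
  ∃ n : ℕ, ∃ h : 0 < n, IsRootedSubtree T s(t, u) u (SimpleGraph.pathGraph n) ⟨0, h⟩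

/-- The leg of `T` at `u` (hanging off `t`) is a 2-leg: the component of `u` in `T − t`,
rooted at `u`, is isomorphic to some `R_{n,2}` with `n ≥ 3`. -/
def IsTwoLegAt {V : Type} (T : SimpleGraph V) (t u : V) : Prop :=
  ∃ n : ℕ, ∃ h : 3 ≤ n, IsRootedSubtree T s(t, u) u (Rtwo n) ⟨0, by omega⟩

/-- `T` is a 2-spider with torso `t`: `T` is a tree, `t` has degree at least 3, and every
connected component of `T − t`, rooted at its vertex adjacent to `t`, is isomorphic as a
rooted tree to some `R_{n,1}` (a 1-leg) or to some `R_{n,2}` with `n ≥ 3` (a 2-leg). -/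
def IsTwoSpiderWithTorso {V : Type} (T : SimpleGraph V) (t : V) : Prop :=
  T.IsTree ∧ 3 ≤ (T.neighborSet t).ncard ∧
    ∀ u : V, T.Adj t u → IsOneLegAt T t u ∨ IsTwoLegAt T t u

/-- `T` is a 2-spider. -/
def IsTwoSpider {V : Type} (T : SimpleGraph V) : Prop :=
  ∃ t : V, IsTwoSpiderWithTorso T t

/-- `T`, as a 2-spider with torso `t`, has exactly three legs, two of which have order one. -/
def ThreeLegsTwoSingletons {V : Type} (T : SimpleGraph V) (t : V) : Prop :=
  (T.neighborSet t).ncard = 3 ∧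
  ∃ u₁ u₂ : V, u₁ ≠ u₂ ∧ T.Adj t u₁ ∧ T.Adj t u₂ ∧
    legOrder T t u₁ = 1 ∧ legOrder T t u₂ = 1


namespace TSP
variable {V : Type} {T : SimpleGraph V} {a b x y : V}

lemma sym2_exists (e : Sym2 V) : ∃ p q, e = s(p, q) :=
  Sym2.ind (fun p q => ⟨p, q, rfl⟩) e

/-- side of an edge at endpoint v -/
def side (T : SimpleGraph V) (e : Sym2 V) (v : V) : Set V :=
  ((T.deleteEdges {e}).connectedComponentMk v).supp

lemma mem_side {e : Sym2 V} {v : V} : x ∈ side T e v ↔ (T.deleteEdges {e}).Reachable x v := by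
  simp [side, ConnectedComponent.mem_supp_iff, ConnectedComponent.eq]

lemma self_mem_side {e : Sym2 V} {v : V} : v ∈ side T e v := mem_side.2 (Reachable.refl v)

lemma bridge (hT : T.IsAcyclic) (hab : T.Adj a b) :
    ¬ (T.deleteEdges {s(a, b)}).Reachable a b :=
  ((isAcyclic_iff_forall_adj_isBridge.1 hT) hab)

lemma not_mem_side_of_bridge (hT : T.IsAcyclic) (hab : T.Adj a b) :
    a ∉ side T s(a, b) b := fun h => bridge hT hab (mem_side.1 h)

lemma side_disjoint (hT : T.IsAcyclic) (hab : T.Adj a b) :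
    side T s(a, b) a ∩ side T s(a, b) b = ∅ := by
  ext x
  simp only [Set.mem_inter_iff, Set.mem_empty_iff_false, iff_false, not_and]
  intro hxa hxb
  exact bridge hT hab ((mem_side.1 hxa).symm.trans (mem_side.1 hxb))

lemma coverage_aux {e : Sym2 V} (hab : e = s(a, b)) :
    ∀ {x y : V} (_ : T.Walk x y),
      (y ∈ side T e a ∨ y ∈ side T e b) → (x ∈ side T e a ∨ x ∈ side T e b) := by
  intro x y w
  induction w with
  | nil => exact id
  | @cons u v _ h p ih =>
    intro hy
    rcases ih hy with hv | hv
    · by_cases he : s(u, v) = e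
      · subst hab; rw [Sym2.eq_iff] at he
        rcases he with ⟨rfl, rfl⟩ | ⟨rfl, rfl⟩
        · exact Or.inl self_mem_side
        · exact Or.inr self_mem_side
      · exact Or.inl (mem_side.2 (Reachable.trans
          ⟨Walk.cons (by simp [deleteEdges_adj, h, he]) Walk.nil⟩ (mem_side.1 hv)))
    · by_cases he : s(u, v) = e
      · subst hab; rw [Sym2.eq_iff] at he
        rcases he with ⟨rfl, rfl⟩ | ⟨rfl, rfl⟩
        · exact Or.inl self_mem_side
        · exact Or.inr self_mem_side
      · exact Or.inr (mem_side.2 (Reachable.trans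
          ⟨Walk.cons (by simp [deleteEdges_adj, h, he]) Walk.nil⟩ (mem_side.1 hv)))

lemma coverage (hc : T.Connected) (x : V) :
    x ∈ side T s(a, b) a ∨ x ∈ side T s(a, b) b := by
  obtain ⟨w⟩ := hc.preconnected x a
  exact coverage_aux rfl w (Or.inl self_mem_side)


section Fin
variable [Fintype V]

lemma side_sum (hT : T.IsTree) (hab : T.Adj a b) :
    (side T s(a, b) a).ncard + (side T s(a, b) b).ncard = Fintype.card V := by
  rw [← Set.ncard_union_eq (Set.disjoint_iff_inter_eq_empty.2 (side_disjoint hT.2 hab))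
    (Set.toFinite _) (Set.toFinite _)]
  have : side T s(a, b) a ∪ side T s(a, b) b = Set.univ := by
    ext x
    simpa using coverage hT.1 x
  rw [this, Set.ncard_univ, Nat.card_eq_fintype_card]

lemma compSizes_deleteEdges (hT : T.IsTree) (hab : T.Adj a b) :
    compSizes (T.deleteEdges {s(a, b)}) =
      {(side T s(a, b) a).ncard, (side T s(a, b) b).ncard} := by
  set H := T.deleteEdges {s(a, b)} with hH
  letI : DecidableEq H.ConnectedComponent := Classical.decEq _
  have hne : H.connectedComponentMk a ≠ H.connectedComponentMk b := by
    intro h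
    exact bridge hT.2 hab (ConnectedComponent.exact h)
  have himg : (Finset.univ.image H.connectedComponentMk) =
      {H.connectedComponentMk a, H.connectedComponentMk b} := by
    ext c
    simp only [Finset.mem_image, Finset.mem_univ, true_and, Finset.mem_insert,
      Finset.mem_singleton]
    constructor
    · rintro ⟨x, rfl⟩
      rcases coverage hT.1 (a := a) (b := b) x with hx | hx
      · exact Or.inl (ConnectedComponent.sound (mem_side.1 hx))
      · exact Or.inr (ConnectedComponent.sound (mem_side.1 hx))
    · rintro (rfl | rfl)
      · exact ⟨a, rfl⟩
      · exact ⟨b, rfl⟩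
  have hcsz : compSizes H = ((Finset.univ.image H.connectedComponentMk).val.map
      fun c => c.supp.ncard) := rfl
  rw [hcsz, himg]
  rw [Finset.insert_val_of_notMem (by simpa using hne), Finset.singleton_val,
    Multiset.map_cons, Multiset.map_singleton]
  rfl

/-- the set of edges whose removal produces component sizes `{d-n, n}` -/
def cutEdges (T : SimpleGraph V) (d n : ℕ) : Set (Sym2 V) :=
  {e | e ∈ T.edgeSet ∧ compSizes (T.deleteEdges {e}) = {d - n, n}}

lemma fromEdgeSet_sdiff_singleton (e : Sym2 V) :
    SimpleGraph.fromEdgeSet (T.edgeSet \ {e}) = T.deleteEdges {e} := by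
  conv_rhs => rw [← fromEdgeSet_edgeSet (T.deleteEdges {e})]
  rw [edgeSet_deleteEdges]

lemma card_compSizes (H : SimpleGraph V) :
    letI : DecidableEq H.ConnectedComponent := Classical.decEq _
    Multiset.card (compSizes H) = (Finset.univ.image H.connectedComponentMk).card := by
  simp [compSizes, Finset.card]

lemma cCoeff_eq_ncard_cutEdges (hT : T.IsTree) {d n : ℕ} (hd : Fintype.card V = d)
    (hn : 0 < n) (hnd : 2 * n < d) :
    cCoeff T {d - n, n} = (cutEdges T d n).ncard := by
  have hset : {F : Set (Sym2 V) | F ⊆ T.edgeSet ∧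
      compSizes (SimpleGraph.fromEdgeSet F) = {d - n, n}} =
      (fun e => T.edgeSet \ {e}) '' cutEdges T d n := by
    ext F
    simp only [Set.mem_setOf_eq, Set.mem_image]
    constructor
    · rintro ⟨hFE, hcs⟩
      set H := SimpleGraph.fromEdgeSet F with hHdef
      letI : DecidableEq H.ConnectedComponent := Classical.decEq _
      have hHle : H ≤ T := by
        rw [← fromEdgeSet_edgeSet T]
        exact fromEdgeSet_mono hFE
      -- two components
      have hcard2 : (Finset.univ.image H.connectedComponentMk).card = 2 := by
        have := card_compSizes H
        rw [hcs] at this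
        simpa using this.symm
      -- there is a missing edge
      have hmiss : ∃ e, e ∈ T.edgeSet ∧ e ∉ F := by
        by_contra h
        push_neg at h
        have hFeq : F = T.edgeSet := Set.Subset.antisymm hFE h
        have hHT : H = T := by rw [hHdef, hFeq, fromEdgeSet_edgeSet]
        have : (Finset.univ.image H.connectedComponentMk).card ≤ 1 := by
          apply Finset.card_le_one.2
          intro c1 h1 c2 h2
          simp only [Finset.mem_image, Finset.mem_univ, true_and] at h1 h2
          obtain ⟨x1, rfl⟩ := h1
          obtain ⟨x2, rfl⟩ := h2
          exact ConnectedComponent.sound (by rw [hHT]; exact hT.1.preconnected x1 x2)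
        omega
      obtain ⟨e1, he1E, he1F⟩ := hmiss
      -- missing edge endpoints are in different components
      have key : ∀ e, e ∈ T.edgeSet → e ∉ F → ∀ p q : V, e = s(p, q) →
          H.connectedComponentMk p ≠ H.connectedComponentMk q := by
        rintro e heE heF p q rfl hpq
        have hle : H ≤ T.deleteEdges {s(p, q)} := by
          rw [← fromEdgeSet_sdiff_singleton]
          exact fromEdgeSet_mono (fun x hx => ⟨hFE hx, by rintro rfl; exact heF hx⟩)
        exact bridge hT.2 heE ((ConnectedComponent.exact hpq).mono hle)
      obtain ⟨a1, b1, he1⟩ : ∃ p q, e1 = s(p, q) := sym2_exists e1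
      have hab1 : T.Adj a1 b1 := by rw [he1] at he1E; exact he1E
      have hne1 : H.connectedComponentMk a1 ≠ H.connectedComponentMk b1 :=
        key e1 he1E he1F a1 b1 he1
      have hpaireq : ({H.connectedComponentMk a1, H.connectedComponentMk b1} :
          Finset H.ConnectedComponent) = Finset.univ.image H.connectedComponentMk := by
        apply Finset.eq_of_subset_of_card_le
        · intro c hc
          simp only [Finset.mem_insert, Finset.mem_singleton] at hc
          rcases hc with rfl | rfl
          · exact Finset.mem_image_of_mem _ (Finset.mem_univ a1)
          · exact Finset.mem_image_of_mem _ (Finset.mem_univ b1)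
        · rw [hcard2, Finset.card_insert_of_notMem (by simpa using hne1),
            Finset.card_singleton]
      have hall : ∀ x : V, H.connectedComponentMk x = H.connectedComponentMk a1 ∨
          H.connectedComponentMk x = H.connectedComponentMk b1 := by
        intro x
        have : H.connectedComponentMk x ∈ Finset.univ.image H.connectedComponentMk :=
          Finset.mem_image_of_mem _ (Finset.mem_univ x)
        rw [← hpaireq] at this
        simpa using this
      -- uniqueness of the missing edge
      have huniq : ∀ e, e ∈ T.edgeSet → e ∉ F → e = e1 := by
        rintro e heE heF
        by_contra hne
        obtain ⟨a2, b2, he2⟩ : ∃ p q, e = s(p, q) := sym2_exists e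
        have hab2 : T.Adj a2 b2 := by rw [he2] at heE; exact heE
        have hne2 : H.connectedComponentMk a2 ≠ H.connectedComponentMk b2 :=
          key e heE heF a2 b2 he2
        have hle : H ≤ T.deleteEdges {e1} := by
          rw [← fromEdgeSet_sdiff_singleton]
          exact fromEdgeSet_mono (fun x hx => ⟨hFE hx, by rintro rfl; exact he1F hx⟩)
        have hadj2 : (T.deleteEdges {e1}).Adj a2 b2 := by
          rw [deleteEdges_adj]
          exact ⟨hab2, by simp [← he2, hne]⟩
        have hreach : (T.deleteEdges {e1}).Reachable a1 b1 := by
          rcases hall a2 with h2 | h2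
          · have h2' : H.connectedComponentMk b2 = H.connectedComponentMk b1 := by
              rcases hall b2 with h | h
              · exact absurd (h.trans h2.symm).symm hne2
              · exact h
            exact ((ConnectedComponent.exact h2.symm).mono hle).trans
              ((hadj2.reachable).trans ((ConnectedComponent.exact h2').mono hle))
          · have h2' : H.connectedComponentMk b2 = H.connectedComponentMk a1 := by
              rcases hall b2 with h | h
              · exact h
              · exact absurd (h.trans h2.symm).symm hne2
            exact (((ConnectedComponent.exact h2'.symm).mono hle).trans
              ((hadj2.symm.reachable).trans ((ConnectedComponent.exact h2).mono hle)))
        rw [he1] at hreach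
        rw [he1] at he1E
        exact bridge hT.2 he1E hreach
      have hFeq : F = T.edgeSet \ {e1} := by
        ext x
        constructor
        · intro hx
          exact ⟨hFE hx, by rintro rfl; exact he1F hx⟩
        · rintro ⟨hxE, hx1⟩
          by_contra hxF
          exact hx1 (huniq x hxE hxF)
      refine ⟨e1, ⟨he1E, ?_⟩, hFeq.symm⟩
      rw [← fromEdgeSet_sdiff_singleton, ← hFeq, ← hHdef]
      exact hcs
    · rintro ⟨e, ⟨heE, hcs⟩, rfl⟩
      refine ⟨Set.diff_subset, ?_⟩
      rw [fromEdgeSet_sdiff_singleton]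
      exact hcs
  rw [cCoeff, hset]
  apply Set.ncard_image_of_injOn
  intro e1 h1 e2 h2 h
  have h1' : e1 ∈ T.edgeSet := h1.1
  have h2' : e2 ∈ T.edgeSet := h2.1
  by_contra hne
  have h' : T.edgeSet \ {e1} = T.edgeSet \ {e2} := h
  have hmem : e1 ∈ T.edgeSet \ {e2} := ⟨h1', fun hh => hne hh⟩
  rw [← h'] at hmem
  exact hmem.2 rfl

end Fin


section Walks
variable {T : SimpleGraph V} {a b t u x y : V}

lemma first_step {G : SimpleGraph V} {x y : V} (hr : G.Reachable x y) (hxy : x ≠ y) :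
    ∃ (z : V) (_ : G.Adj x z) (r : G.Walk z y), r.IsPath ∧ x ∉ r.support := by
  classical
  obtain ⟨w⟩ := hr
  obtain ⟨q, hq⟩ := w.toPath
  cases q with
  | nil => exact absurd rfl hxy
  | cons h r =>
    rw [Walk.cons_isPath_iff] at hq
    exact ⟨_, h, r, hq.1, hq.2⟩

lemma mem_side_edges_avoid {e f : Sym2 V} {v : V} (hv : x ∈ side T e v)
    (hb : ∃ w, w ∈ f ∧ w ∉ side T e v) :
    ∃ p : (T.deleteEdges {e}).Walk x v, f ∉ p.edges := by
  classical
  obtain ⟨w⟩ := mem_side.1 hv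
  obtain ⟨q, hq⟩ := w.toPath
  refine ⟨q, fun hf => ?_⟩
  obtain ⟨z, hzf, hzs⟩ := hb
  have hzsup : z ∈ q.support := by
    obtain ⟨p, q', rfl⟩ := sym2_exists f
    rcases Sym2.mem_iff.1 hzf with rfl | rfl
    · exact q.fst_mem_support_of_mem_edges hf
    · exact q.snd_mem_support_of_mem_edges hf
  exact hzs (mem_side.2 ⟨q.dropUntil z hzsup⟩)

/-- any walk in `T\e` starting in `side T e v` avoids edges having an endpoint outside that side -/
lemma transfer_walk {e f : Sym2 V} {v : V} (hv : x ∈ side T e v)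
    (hb : ∃ w, w ∈ f ∧ w ∉ side T e v) :
    (T.deleteEdges {f}).Reachable x v := by
  obtain ⟨p, hp⟩ := mem_side_edges_avoid hv hb
  refine ⟨p.transfer _ fun e' he' => ?_⟩
  rw [edgeSet_deleteEdges]
  have := p.edges_subset_edgeSet he'
  rw [edgeSet_deleteEdges] at this
  refine ⟨this.1, ?_⟩
  simp only [Set.mem_singleton_iff]
  rintro rfl
  exact hp he'

lemma side_subset_leg (hT : T.IsTree) (hab : T.Adj a b) (ht : t ∈ side T s(a, b) a) :
    ∃ u, T.Adj t u ∧ side T s(a, b) b ⊆ side T s(t, u) u := by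
  have htb : t ∉ side T s(a, b) b := by
    intro h
    have := side_disjoint hT.2 hab (a := a) (b := b)
    exact absurd (Set.eq_empty_iff_forall_notMem.1 this t) (by simp [ht, h])
  have htneb : t ≠ b := fun h => htb (h ▸ self_mem_side)
  obtain ⟨z, hz, r, hr, hts⟩ := first_step (hT.1.preconnected t b) htneb
  refine ⟨z, hz, fun y hy => ?_⟩
  -- y ∈ side T s(a,b) b ; build walk y → b → z avoiding s(t,z)
  have h1 : (T.deleteEdges {s(t, z)}).Reachable y b :=
    transfer_walk hy ⟨t, by simp, htb⟩
  have h2 : (T.deleteEdges {s(t, z)}).Reachable b z := by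
    refine ⟨(r.transfer _ fun e' he' => ?_).reverse⟩
    rw [edgeSet_deleteEdges]
    refine ⟨r.edges_subset_edgeSet he', ?_⟩
    simp only [Set.mem_singleton_iff]
    rintro rfl
    exact hts (r.fst_mem_support_of_mem_edges he')
  exact mem_side.2 (h1.trans h2)

lemma two_mul_side_le [Fintype V] {d : ℕ} (hT : T.IsTree) (hd : Fintype.card V = d)
    (hshort : ∀ u : V, T.Adj t u → 2 * legOrder T t u ≤ d)
    (hab : T.Adj a b) (ht : t ∈ side T s(a, b) a) :
    2 * (side T s(a, b) b).ncard ≤ d := by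
  obtain ⟨u, htu, hsub⟩ := side_subset_leg hT hab ht
  have h1 : (side T s(a, b) b).ncard ≤ (side T s(t, u) u).ncard :=
    Set.ncard_le_ncard hsub (Set.toFinite _)
  have h2 := hshort u htu
  have : legOrder T t u = (side T s(t, u) u).ncard := rfl
  omega

lemma last_edge {e : Sym2 V} (hy : y ∈ side T e b) (hyb : y ≠ b) :
    ∃ z, T.Adj z b ∧ s(z, b) ≠ e ∧ z ∈ side T e b ∧ y ∈ side T s(z, b) z := by
  classical
  obtain ⟨z, hz, r, hr, hbs⟩ := first_step ((mem_side.1 hy).symm) (Ne.symm hyb)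
  have hzadj : T.Adj b z := (deleteEdges_adj.1 hz).1
  have hze : s(b, z) ∉ ({e} : Set (Sym2 V)) := (deleteEdges_adj.1 hz).2
  refine ⟨z, hzadj.symm, by rw [Sym2.eq_swap]; exact fun h => hze (Set.mem_singleton_iff.2 h),
    mem_side.2 hz.symm.reachable, ?_⟩
  rw [mem_side]
  refine ⟨(r.reverse.transfer _ fun e' he' => ?_)⟩
  rw [edgeSet_deleteEdges]
  have hT' := r.reverse.edges_subset_edgeSet he'
  rw [edgeSet_deleteEdges] at hT'
  refine ⟨hT'.1, ?_⟩
  simp only [Set.mem_singleton_iff]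
  rintro rfl
  rw [Walk.edges_reverse, List.mem_reverse] at he'
  exact hbs (r.snd_mem_support_of_mem_edges he')

lemma side_nested {c : V} {e : Sym2 V} (hT : T.IsAcyclic) (hbe : b ∈ e) (hbc : T.Adj b c)
    (hcb : c ∈ side T e b) : side T s(b, c) c ⊆ side T e b := by
  intro y hy
  have hbnot : b ∉ side T s(b, c) c := not_mem_side_of_bridge hT hbc
  exact mem_side.2 ((transfer_walk hy ⟨b, hbe, hbnot⟩).trans (mem_side.1 hcb))

end Walks


section Leg
variable {T : SimpleGraph V} {a b c t u x y : V}

lemma not_mem_other_side (hT : T.IsAcyclic) (hab : T.Adj a b) (hx : x ∈ side T s(a, b) a) :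
    x ∉ side T s(a, b) b := by
  intro h
  have hd := side_disjoint hT hab (a := a) (b := b)
  rw [Set.eq_empty_iff_forall_notMem] at hd
  exact hd x ⟨hx, h⟩

lemma mem_leg_of_adj (hT : T.IsAcyclic) (htu : T.Adj t u) (hx : x ∈ side T s(t, u) u)
    (hadj : T.Adj x y) (hyt : y ≠ t) : y ∈ side T s(t, u) u := by
  have hxt : x ≠ t := fun h => not_mem_side_of_bridge hT htu (h ▸ hx)
  have he : s(y, x) ∉ ({s(t, u)} : Set (Sym2 V)) := by
    simp only [Set.mem_singleton_iff, Sym2.eq_iff]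
    rintro (⟨h1, h2⟩ | ⟨h1, h2⟩)
    · exact hyt h1
    · exact hxt h2
  exact mem_side.2 ((deleteEdges_adj.2 ⟨hadj.symm, he⟩).reachable.trans (mem_side.1 hx))

lemma adj_t_eq_u (hT : T.IsAcyclic) (htu : T.Adj t u) (hc : T.Adj t c)
    (hcS : c ∈ side T s(t, u) u) : c = u := by
  by_contra hne
  have he : s(t, c) ∉ ({s(t, u)} : Set (Sym2 V)) := by
    simp only [Set.mem_singleton_iff, Sym2.eq_iff]
    rintro (⟨h1, h2⟩ | ⟨h1, h2⟩)
    · exact hne h2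
    · exact htu.ne h1
  exact bridge hT htu ((deleteEdges_adj.2 ⟨hc, he⟩).reachable.trans (mem_side.1 hcS))

end Leg

section RFacts

lemma rtwo_adj {n : ℕ} {i j : Fin n} : (Rtwo n).Adj i j ↔ i.val ≠ j.val ∧
    ((j.val = i.val + 1 ∧ j.val ≤ n - 2) ∨ (i.val = n - 3 ∧ j.val = n - 1) ∨
     (j.val = i.val + 1 ∧ j.val ≤ n - 2) ∨ (j.val = i.val + 1 ∧ j.val ≤ n - 2) ∨
     (i.val = j.val + 1 ∧ i.val ≤ n - 2) ∨ (j.val = n - 3 ∧ i.val = n - 1)) := by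
  rw [Rtwo, SimpleGraph.fromRel_adj]
  simp only [Ne, Fin.ext_iff]
  tauto

lemma path_three {n : ℕ} {w x y z : Fin n} (hx : (SimpleGraph.pathGraph n).Adj w x)
    (hy : (SimpleGraph.pathGraph n).Adj w y) (hz : (SimpleGraph.pathGraph n).Adj w z)
    (hxy : x ≠ y) (hxz : x ≠ z) (hyz : y ≠ z) : False := by
  rw [pathGraph_adj] at hx hy hz
  have h1 : x.val ≠ y.val := fun h => hxy (Fin.ext h)
  have h2 : x.val ≠ z.val := fun h => hxz (Fin.ext h)
  have h3 : y.val ≠ z.val := fun h => hyz (Fin.ext h)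
  omega

lemma path_root {n : ℕ} {r x y : Fin n} (hr : r.val = 0)
    (hx : (SimpleGraph.pathGraph n).Adj r x) (hy : (SimpleGraph.pathGraph n).Adj r y) :
    x = y := by
  rw [pathGraph_adj] at hx hy
  apply Fin.ext
  omega

lemma rtwo_three {n : ℕ} (h4 : 4 ≤ n) {w x y z : Fin n} (hx : (Rtwo n).Adj w x)
    (hy : (Rtwo n).Adj w y) (hz : (Rtwo n).Adj w z)
    (hxy : x ≠ y) (hxz : x ≠ z) (hyz : y ≠ z) :
    w.val = n - 3 ∧ (x.val = n - 4 ∨ x.val = n - 2 ∨ x.val = n - 1) ∧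
      (y.val = n - 4 ∨ y.val = n - 2 ∨ y.val = n - 1) ∧
      (z.val = n - 4 ∨ z.val = n - 2 ∨ z.val = n - 1) := by
  rw [rtwo_adj] at hx hy hz
  have h1 : x.val ≠ y.val := fun h => hxy (Fin.ext h)
  have h2 : x.val ≠ z.val := fun h => hxz (Fin.ext h)
  have h3 : y.val ≠ z.val := fun h => hyz (Fin.ext h)
  have hxl := x.isLt
  have hyl := y.isLt
  have hzl := z.isLt
  have hwl := w.isLt
  omega

lemma rtwo_nbr_of_branch {n : ℕ} (h4 : 4 ≤ n) {w x : Fin n} (hw : w.val = n - 3)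
    (h : (Rtwo n).Adj w x) : x.val = n - 4 ∨ x.val = n - 2 ∨ x.val = n - 1 := by
  rw [rtwo_adj] at h
  have := x.isLt
  omega

lemma rtwo_nbr_of_tip {n : ℕ} (h4 : 4 ≤ n) {w x : Fin n}
    (hw : w.val = n - 2 ∨ w.val = n - 1) (h : (Rtwo n).Adj w x) : x.val = n - 3 := by
  rw [rtwo_adj] at h
  have := x.isLt
  have := w.isLt
  omega

lemma rtwo_root {n : ℕ} (h4 : 4 ≤ n) {r x : Fin n} (hr : r.val = 0)
    (h : (Rtwo n).Adj r x) : x.val = 1 := by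
  rw [rtwo_adj] at h
  have := x.isLt
  omega

lemma path_root_val {n : ℕ} (h : 0 < n) : ((⟨0, h⟩ : Fin n)).val = 0 := rfl

end RFacts



section IsoHelpers
variable {T : SimpleGraph V} {t u : V}

lemma leg_key_adj {W : Type} {R : SimpleGraph W} (hT : T.IsAcyclic) (htu : T.Adj t u)
    (φ : R ≃g (T.deleteEdges {s(t, u)}).induce (side T s(t, u) u))
    {x y : V} (hx : x ∈ side T s(t, u) u) (hy : y ∈ side T s(t, u) u) :
    R.Adj (φ.symm ⟨x, hx⟩) (φ.symm ⟨y, hy⟩) ↔ T.Adj x y := by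
  have h1 : ((T.deleteEdges {s(t, u)}).induce (side T s(t, u) u)).Adj
      (φ (φ.symm ⟨x, hx⟩)) (φ (φ.symm ⟨y, hy⟩)) ↔
      R.Adj (φ.symm ⟨x, hx⟩) (φ.symm ⟨y, hy⟩) := φ.map_adj_iff
  rw [φ.apply_symm_apply, φ.apply_symm_apply] at h1
  rw [← h1]
  show (T.deleteEdges {s(t, u)}).Adj x y ↔ T.Adj x y
  rw [deleteEdges_adj]
  refine ⟨fun h => h.1, fun h => ⟨h, ?_⟩⟩
  simp only [Set.mem_singleton_iff, Sym2.eq_iff]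
  have hxt : x ≠ t := fun hh => not_mem_side_of_bridge hT htu (hh ▸ hx)
  have hyt : y ≠ t := fun hh => not_mem_side_of_bridge hT htu (hh ▸ hy)
  rintro (⟨h1, h2⟩ | ⟨h1, h2⟩)
  · exact hxt h1
  · exact hyt h2

lemma leg_inj {W : Type} {R : SimpleGraph W} {G : SimpleGraph V} {S : Set V}
    (φ : R ≃g G.induce S) {x y : V} (hx : x ∈ S) (hy : y ∈ S)
    (h : φ.symm ⟨x, hx⟩ = φ.symm ⟨y, hy⟩) : x = y := by
  have h2 : (⟨x, hx⟩ : S) = ⟨y, hy⟩ := φ.symm.toEquiv.injective h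
  exact congrArg Subtype.val h2

lemma leg_symm_root {W : Type} {R : SimpleGraph W} {G : SimpleGraph V} {S : Set V}
    (φ : R ≃g G.induce S) {r : W} {u : V} (hu : u ∈ S) (hroot : (φ r : V) = u) :
    φ.symm ⟨u, hu⟩ = r := by
  have h : φ r = ⟨u, hu⟩ := Subtype.ext hroot
  rw [← h]
  exact φ.symm_apply_apply r

end IsoHelpers

section Unique
variable [Fintype V] {T : SimpleGraph V} {t a b c1 c2 : V}

lemma unique_child (hsp : IsTwoSpiderWithTorso T t)
    (hab : T.Adj a b) (ht : t ∈ side T s(a, b) a)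
    (h4 : 4 ≤ (side T s(a, b) b).ncard)
    (h1 : T.Adj b c1) (hc1 : c1 ∈ side T s(a, b) b)
    (h2 : T.Adj b c2) (hc2 : c2 ∈ side T s(a, b) b) : c1 = c2 := by
  obtain ⟨hT, -, hlegs⟩ := hsp
  by_contra hne
  obtain ⟨u, htu, hsub⟩ := side_subset_leg hT hab ht
  have htS : t ∉ side T s(t, u) u := not_mem_side_of_bridge hT.2 htu
  have hbS : b ∈ side T s(t, u) u := hsub self_mem_side
  have hc1S : c1 ∈ side T s(t, u) u := hsub hc1
  have hc2S : c2 ∈ side T s(t, u) u := hsub hc2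
  have hanotb : a ∉ side T s(a, b) b := not_mem_other_side hT.2 hab self_mem_side
  have htnotb : t ∉ side T s(a, b) b := not_mem_other_side hT.2 hab ht
  have hbt : b ≠ t := fun h => htS (h ▸ hbS)
  have hac1 : a ≠ c1 := fun h => hanotb (h ▸ hc1)
  have hac2 : a ≠ c2 := fun h => hanotb (h ▸ hc2)
  rcases hlegs u htu with ⟨n, hn0, -, -, φ, hroot⟩ | ⟨n, hn3, -, -, φ, hroot⟩
  · -- 1-leg : path
    have hSn : (side T s(t, u) u).ncard = n := by
      have hc : Nat.card (side T s(t, u) u) = Nat.card (Fin n) :=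
        Nat.card_congr (φ.toEquiv.symm)
      rw [← Nat.card_coe_set_eq, hc]
      simp
    have h4n : 4 ≤ n := by
      have hmono : (side T s(a, b) b).ncard ≤ (side T s(t, u) u).ncard :=
        Set.ncard_le_ncard hsub (Set.toFinite _)
      omega
    by_cases hat : a = t
    · subst hat
      have hbu : b = u := adj_t_eq_u hT.2 htu hab hbS
      subst hbu
      have hr0 : φ.symm ⟨b, hbS⟩ = ⟨0, hn0⟩ := leg_symm_root φ hbS hroot
      have hA1 : (SimpleGraph.pathGraph n).Adj (φ.symm ⟨b, hbS⟩) (φ.symm ⟨c1, hc1S⟩) :=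
        (leg_key_adj hT.2 htu φ hbS hc1S).2 h1
      have hA2 : (SimpleGraph.pathGraph n).Adj (φ.symm ⟨b, hbS⟩) (φ.symm ⟨c2, hc2S⟩) :=
        (leg_key_adj hT.2 htu φ hbS hc2S).2 h2
      rw [hr0] at hA1 hA2
      exact hne (leg_inj φ hc1S hc2S (path_root rfl hA1 hA2))
    · have haS : a ∈ side T s(t, u) u := mem_leg_of_adj hT.2 htu hbS hab.symm hat
      have hAa : (SimpleGraph.pathGraph n).Adj (φ.symm ⟨b, hbS⟩) (φ.symm ⟨a, haS⟩) :=
        (leg_key_adj hT.2 htu φ hbS haS).2 hab.symm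
      have hA1 : (SimpleGraph.pathGraph n).Adj (φ.symm ⟨b, hbS⟩) (φ.symm ⟨c1, hc1S⟩) :=
        (leg_key_adj hT.2 htu φ hbS hc1S).2 h1
      have hA2 : (SimpleGraph.pathGraph n).Adj (φ.symm ⟨b, hbS⟩) (φ.symm ⟨c2, hc2S⟩) :=
        (leg_key_adj hT.2 htu φ hbS hc2S).2 h2
      exact path_three hAa hA1 hA2
        (fun h => hac1 (leg_inj φ haS hc1S h))
        (fun h => hac2 (leg_inj φ haS hc2S h))
        (fun h => hne (leg_inj φ hc1S hc2S h))
  · -- 2-leg : Rtwo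
    have hSn : (side T s(t, u) u).ncard = n := by
      have hc : Nat.card (side T s(t, u) u) = Nat.card (Fin n) :=
        Nat.card_congr (φ.toEquiv.symm)
      rw [← Nat.card_coe_set_eq, hc]
      simp
    have h4n : 4 ≤ n := by
      have hmono : (side T s(a, b) b).ncard ≤ (side T s(t, u) u).ncard :=
        Set.ncard_le_ncard hsub (Set.toFinite _)
      omega
    by_cases hat : a = t
    · subst hat
      have hbu : b = u := adj_t_eq_u hT.2 htu hab hbS
      subst hbu
      have hr0 := leg_symm_root φ hbS hroot
      have hA1 : (Rtwo n).Adj (φ.symm ⟨b, hbS⟩) (φ.symm ⟨c1, hc1S⟩) :=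
        (leg_key_adj hT.2 htu φ hbS hc1S).2 h1
      have hA2 : (Rtwo n).Adj (φ.symm ⟨b, hbS⟩) (φ.symm ⟨c2, hc2S⟩) :=
        (leg_key_adj hT.2 htu φ hbS hc2S).2 h2
      have hv0 : (φ.symm ⟨b, hbS⟩).val = 0 := by rw [hr0]
      have hv1 : (φ.symm ⟨c1, hc1S⟩).val = 1 := rtwo_root h4n hv0 hA1
      have hv2 : (φ.symm ⟨c2, hc2S⟩).val = 1 := rtwo_root h4n hv0 hA2
      exact hne (leg_inj φ hc1S hc2S (Fin.ext (hv1.trans hv2.symm)))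
    · have haS : a ∈ side T s(t, u) u := mem_leg_of_adj hT.2 htu hbS hab.symm hat
      have hAa : (Rtwo n).Adj (φ.symm ⟨b, hbS⟩) (φ.symm ⟨a, haS⟩) :=
        (leg_key_adj hT.2 htu φ hbS haS).2 hab.symm
      have hA1 : (Rtwo n).Adj (φ.symm ⟨b, hbS⟩) (φ.symm ⟨c1, hc1S⟩) :=
        (leg_key_adj hT.2 htu φ hbS hc1S).2 h1
      have hA2 : (Rtwo n).Adj (φ.symm ⟨b, hbS⟩) (φ.symm ⟨c2, hc2S⟩) :=
        (leg_key_adj hT.2 htu φ hbS hc2S).2 h2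
      obtain ⟨hwb3, hwa', hw1', hw2'⟩ := rtwo_three h4n hAa hA1 hA2
        (fun h => hac1 (leg_inj φ haS hc1S h))
        (fun h => hac2 (leg_inj φ haS hc2S h))
        (fun h => hne (leg_inj φ hc1S hc2S h))
      -- tip vertices have b as unique neighbor
      have tip : ∀ (x : V) (hx : x ∈ side T s(t, u) u),
          ((φ.symm ⟨x, hx⟩).val = n - 2 ∨ (φ.symm ⟨x, hx⟩).val = n - 1) →
          ∀ y : V, T.Adj x y → y = b := by
        intro x hx hvx y hxy
        by_cases hyt : y = t
        · exfalso
          subst hyt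
          have hxu : x = u := adj_t_eq_u hT.2 htu hxy.symm hx
          subst hxu
          have hr0 := leg_symm_root φ hx hroot
          have hv0 : (φ.symm ⟨x, hx⟩).val = 0 := by rw [hr0]
          omega
        · have hyS := mem_leg_of_adj hT.2 htu hx hxy hyt
          have hAdj : (Rtwo n).Adj (φ.symm ⟨x, hx⟩) (φ.symm ⟨y, hyS⟩) :=
            (leg_key_adj hT.2 htu φ hx hyS).2 hxy
          have hv3 : (φ.symm ⟨y, hyS⟩).val = n - 3 := rtwo_nbr_of_tip h4n hvx hAdj
          exact leg_inj φ hyS hbS (Fin.ext (hv3.trans hwb3.symm))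
      -- a is not a tip
      have hwa4 : (φ.symm ⟨a, haS⟩).val = n - 4 := by
        rcases hwa' with h | h | h
        · exact h
        all_goals {
          exfalso
          have hta : a ≠ t := hat
          obtain ⟨z, hz, -, -, -⟩ := first_step (mem_side.1 ht).symm (Ne.symm (fun hh => hta hh.symm))
          have hzb : z = b := tip a haS (by omega) z (deleteEdges_adj.1 hz).1
          subst hzb
          exact (deleteEdges_adj.1 hz).2 rfl
        }
      have hw1t : (φ.symm ⟨c1, hc1S⟩).val = n - 2 ∨ (φ.symm ⟨c1, hc1S⟩).val = n - 1 := by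
        rcases hw1' with h | h | h
        · exact absurd (leg_inj φ haS hc1S (Fin.ext (hwa4.trans h.symm))) hac1
        · exact Or.inl h
        · exact Or.inr h
      have hw2t : (φ.symm ⟨c2, hc2S⟩).val = n - 2 ∨ (φ.symm ⟨c2, hc2S⟩).val = n - 1 := by
        rcases hw2' with h | h | h
        · exact absurd (leg_inj φ haS hc2S (Fin.ext (hwa4.trans h.symm))) hac2
        · exact Or.inl h
        · exact Or.inr h
      -- the small side is contained in {b, c1, c2}
      have hsub3 : side T s(a, b) b ⊆ {b, c1, c2} := by
        intro y hy
        by_cases hyb : y = b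
        · exact Or.inl hyb
        obtain ⟨z, hzb, hzne, hzS', hyz⟩ := last_edge hy hyb
        have hzS : z ∈ side T s(t, u) u := hsub hzS'
        have hza : z ≠ a := fun h => hanotb (h ▸ hzS')
        have hAdjz : (Rtwo n).Adj (φ.symm ⟨b, hbS⟩) (φ.symm ⟨z, hzS⟩) :=
          (leg_key_adj hT.2 htu φ hbS hzS).2 hzb.symm
        have hz' := rtwo_nbr_of_branch h4n hwb3 hAdjz
        have hzt : (φ.symm ⟨z, hzS⟩).val = n - 2 ∨ (φ.symm ⟨z, hzS⟩).val = n - 1 := by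
          rcases hz' with h | h | h
          · exact absurd (leg_inj φ haS hzS (Fin.ext (hwa4.trans h.symm))).symm hza
          · exact Or.inl h
          · exact Or.inr h
        have hz12 : z = c1 ∨ z = c2 := by
          have hvne : (φ.symm ⟨c1, hc1S⟩).val ≠ (φ.symm ⟨c2, hc2S⟩).val :=
            fun h => hne (leg_inj φ hc1S hc2S (Fin.ext h))
          have : (φ.symm ⟨z, hzS⟩).val = (φ.symm ⟨c1, hc1S⟩).val ∨
              (φ.symm ⟨z, hzS⟩).val = (φ.symm ⟨c2, hc2S⟩).val := by omega
          rcases this with h | h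
          · exact Or.inl (leg_inj φ hzS hc1S (Fin.ext h))
          · exact Or.inr (leg_inj φ hzS hc2S (Fin.ext h))
        have hyzeq : y = z := by
          by_contra hyzne
          obtain ⟨x', hx', -, -, -⟩ := first_step (mem_side.1 hyz).symm (fun hh => hyzne hh.symm)
          have hx'b : x' = b := tip z hzS hzt x' (deleteEdges_adj.1 hx').1
          subst hx'b
          exact (deleteEdges_adj.1 hx').2 rfl
        subst hyzeq
        rcases hz12 with h | h
        · exact Or.inr (Or.inl h)
        · exact Or.inr (Or.inr h)
      have hle3 : (side T s(a, b) b).ncard ≤ 3 := by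
        have hm : (side T s(a, b) b).ncard ≤ ({b, c1, c2} : Set V).ncard :=
          Set.ncard_le_ncard hsub3 (Set.toFinite _)
        have t1 := Set.ncard_insert_le b ({c1, c2} : Set V)
        have t2 := Set.ncard_insert_le c1 ({c2} : Set V)
        have t3 : ({c2} : Set V).ncard = 1 := Set.ncard_singleton c2
        omega
      omega

end Unique


section Step
variable [Fintype V] {T : SimpleGraph V} {t : V} {d n : ℕ}

lemma cut_mem_elim (hT : T.IsTree) (hd : Fintype.card V = d)
    (hshort : ∀ u : V, T.Adj t u → 2 * legOrder T t u ≤ d)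
    (h2n : 2 * n < d) {e : Sym2 V} (he : e ∈ cutEdges T d n) :
    ∃ a b : V, e = s(a, b) ∧ T.Adj a b ∧ t ∈ side T e a ∧ (side T e b).ncard = n := by
  obtain ⟨heE, hcs⟩ := he
  obtain ⟨p, q, rfl⟩ := sym2_exists e
  have hpq : T.Adj p q := heE
  have hsum := side_sum hT hpq
  have hcs' := compSizes_deleteEdges hT hpq
  rw [hcs] at hcs'
  rcases coverage hT.1 (a := p) (b := q) t with htp | htq
  · refine ⟨p, q, rfl, hpq, htp, ?_⟩
    have hmem : (side T s(p, q) q).ncard ∈ ({d - n, n} : Multiset ℕ) := by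
      rw [hcs']
      simp
    simp only [Multiset.insert_eq_cons, Multiset.mem_cons, Multiset.mem_singleton] at hmem
    have hbound := two_mul_side_le hT hd hshort hpq htp
    rcases hmem with h | h
    · omega
    · exact h
  · refine ⟨q, p, Sym2.eq_swap.symm, hpq.symm, htq, ?_⟩
    have htq' : t ∈ side T s(q, p) q := by rw [Sym2.eq_swap]; exact htq
    have hbound := two_mul_side_le hT hd hshort hpq.symm htq'
    have hswap : side T s(q, p) p = side T s(p, q) p := by rw [Sym2.eq_swap]
    rw [hswap] at hbound
    have hmem : (side T s(p, q) p).ncard ∈ ({d - n, n} : Multiset ℕ) := by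
      rw [hcs']
      simp
    simp only [Multiset.insert_eq_cons, Multiset.mem_cons, Multiset.mem_singleton] at hmem
    rcases hmem with h | h
    · omega
    · exact h

lemma step_exists (hsp : IsTwoSpiderWithTorso T t) (hd : Fintype.card V = d)
    (hshort : ∀ u : V, T.Adj t u → 2 * legOrder T t u ≤ d)
    (hn : 3 ≤ n) (h2n : 2 * (n + 1) < d) {e : Sym2 V} (he : e ∈ cutEdges T d (n + 1)) :
    ∃ a b c : V, e = s(a, b) ∧ T.Adj a b ∧ T.Adj b c ∧ t ∈ side T e a ∧
      t ∈ side T s(b, c) b ∧ s(b, c) ∈ cutEdges T d n := by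
  have hT := hsp.1
  obtain ⟨a, b, rfl, hab, ht, hcard⟩ := cut_mem_elim hT hd hshort h2n he
  have h4 : 4 ≤ (side T s(a, b) b).ncard := by omega
  obtain ⟨y, hy, hyb⟩ :=
    Set.exists_ne_of_one_lt_ncard (s := side T s(a, b) b) (by omega) b
  obtain ⟨c, hcb, hce, hcS, -⟩ := last_edge hy hyb
  have hAdjbc : T.Adj b c := hcb.symm
  have hnest : side T s(b, c) c ⊆ side T s(a, b) b :=
    side_nested hT.2 (by simp) hAdjbc hcS
  have htnotb : t ∉ side T s(a, b) b := not_mem_other_side hT.2 hab ht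
  have htf : t ∉ side T s(b, c) c := fun h => htnotb (hnest h)
  have htb : t ∈ side T s(b, c) b := by
    rcases coverage hT.1 (a := b) (b := c) t with h | h
    · exact h
    · exact absurd h htf
  refine ⟨a, b, c, rfl, hab, hAdjbc, ht, htb, ?_⟩
  have hdiffside : side T s(b, c) c = side T s(a, b) b \ {b} := by
    apply Set.Subset.antisymm
    · intro z hz
      refine ⟨hnest hz, ?_⟩
      simp only [Set.mem_singleton_iff]
      exact fun hh => not_mem_side_of_bridge hT.2 hAdjbc (hh ▸ hz)
    · rintro z ⟨hz, hzb⟩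
      rw [Set.mem_singleton_iff] at hzb
      obtain ⟨z', hz'b, hz'ne, hz'S, hzz'⟩ := last_edge hz hzb
      have hz'c : z' = c := unique_child hsp hab ht h4 hz'b.symm hz'S hAdjbc hcS
      subst hz'c
      rw [show s(z', b) = s(b, z') from Sym2.eq_swap] at hzz'
      exact hzz'
  have hccard : (side T s(b, c) c).ncard = n := by
    rw [hdiffside, Set.ncard_diff_singleton_of_mem self_mem_side]
    omega
  have hsum := side_sum hT hAdjbc
  rw [hd] at hsum
  refine ⟨hAdjbc, ?_⟩
  rw [compSizes_deleteEdges hT hAdjbc, hccard,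
    show (side T s(b, c) b).ncard = d - n by omega]

end Step


section Count
variable [Fintype V] {T : SimpleGraph V} {t : V} {d n : ℕ}

lemma cut_step (hsp : IsTwoSpiderWithTorso T t) (hd : Fintype.card V = d)
    (hshort : ∀ u : V, T.Adj t u → 2 * legOrder T t u ≤ d)
    (hn : 3 ≤ n) (h2n : 2 * (n + 1) < d) :
    (cutEdges T d (n + 1)).ncard ≤ (cutEdges T d n).ncard := by
  have hT := hsp.1
  have main : ∀ e : Sym2 V, ∃ fe : Sym2 V, e ∈ cutEdges T d (n + 1) →
      fe ∈ cutEdges T d n ∧ ∃ a b c : V, e = s(a, b) ∧ fe = s(b, c) ∧ T.Adj a b ∧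
        T.Adj b c ∧ t ∈ side T e a ∧ t ∈ side T fe b := by
    intro e
    by_cases he : e ∈ cutEdges T d (n + 1)
    · obtain ⟨a, b, c, heq, hab, hbc, hta, htb, hf⟩ := step_exists hsp hd hshort hn h2n he
      exact ⟨s(b, c), fun _ => ⟨hf, a, b, c, heq, rfl, hab, hbc, hta, htb⟩⟩
    · exact ⟨e, fun h => absurd h he⟩
  choose f hf using main
  apply Set.ncard_le_ncard_of_injOn f
  · intro e he
    exact (hf e he).1
  · intro e1 h1 e2 h2 heq
    obtain ⟨-, a1, b1, c1, he1, hf1, hab1, hbc1, ht1, htb1⟩ := hf e1 h1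
    obtain ⟨-, a2, b2, c2, he2, hf2, hab2, hbc2, ht2, htb2⟩ := hf e2 h2
    rw [hf1, hf2] at heq
    rw [hf1] at htb1
    rw [hf2] at htb2
    have hb12 : b1 = b2 := by
      rcases Sym2.eq_iff.1 heq with ⟨h1', h2'⟩ | ⟨h1', h2'⟩
      · exact h1'
      · exfalso
        subst h1'
        subst h2'
        have hsw : t ∈ side T s(b1, c1) c1 := by
          rw [Sym2.eq_swap]
          exact htb2
        exact not_mem_other_side hT.2 hbc1 htb1 hsw
    subst hb12
    by_cases ha12 : a1 = a2
    · rw [he1, he2, ha12]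
    · exfalso
      have hb2not : b1 ∉ side T s(a2, b1) a2 :=
        fun h => not_mem_other_side hT.2 hab2 h self_mem_side
      have ht2' : t ∈ side T s(a2, b1) a2 := by rw [← he2]; exact ht2
      have hreach2 : (T.deleteEdges {e1}).Reachable t a2 :=
        transfer_walk ht2' ⟨b1, by rw [he1]; simp, hb2not⟩
      have hee : s(a2, b1) ∉ ({e1} : Set (Sym2 V)) := by
        rw [he1]
        simp only [Set.mem_singleton_iff, Sym2.eq_iff]
        rintro (⟨hx, -⟩ | ⟨hx, hy⟩)
        · exact ha12 hx.symm
        · exact hab1.ne' hy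
      have hadj21 : (T.deleteEdges {e1}).Adj a2 b1 := deleteEdges_adj.2 ⟨hab2, hee⟩
      have ht1' : (T.deleteEdges {e1}).Reachable a1 t := (mem_side.1 ht1).symm
      have hreach1 : (T.deleteEdges {e1}).Reachable a1 b1 :=
        ht1'.trans (hreach2.trans hadj21.reachable)
      rw [he1] at hreach1
      exact bridge hT.2 hab1 hreach1

lemma cut_mono (hsp : IsTwoSpiderWithTorso T t) (hd : Fintype.card V = d)
    (hshort : ∀ u : V, T.Adj t u → 2 * legOrder T t u ≤ d)
    {i j : ℕ} (hi : 3 ≤ i) (hij : i ≤ j) (hj : 2 * j < d) :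
    (cutEdges T d j).ncard ≤ (cutEdges T d i).ncard := by
  induction j, hij using Nat.le_induction with
  | base => exact le_refl _
  | succ m hm ih =>
    have h1 : (cutEdges T d (m + 1)).ncard ≤ (cutEdges T d m).ncard :=
      cut_step hsp hd hshort (by omega) hj
    exact h1.trans (ih (by omega))

end Count

end TSP

/-- Let `T` be a 2-spider of order `d` (with torso `t`) all of whose legs have order at
most `d/2`, and which does not have exactly three legs with two of them of order one.
Then `c_i(T) ≥ c_j(T)` for all `3 ≤ i < j < d/2`. -/
theorem twoSpider_caseII_monotone {V : Type} [Fintype V] (T : SimpleGraph V) (t : V)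
    (d : ℕ) (hd : Fintype.card V = d)
    (hsp : IsTwoSpiderWithTorso T t)
    (hshort : ∀ u : V, T.Adj t u → 2 * legOrder T t u ≤ d)
    (hnot : ¬ ThreeLegsTwoSingletons T t) :
    ∀ i j : ℕ, 3 ≤ i → i < j → 2 * j < d →
      cCoeff T {d - j, j} ≤ cCoeff T {d - i, i} := by
  intro i j hi hij hjd
  have hT := hsp.1
  rw [TSP.cCoeff_eq_ncard_cutEdges hT hd (show 0 < j by omega) hjd,
    TSP.cCoeff_eq_ncard_cutEdges hT hd (show 0 < i by omega) (show 2 * i < d by omega)]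
  exact TSP.cut_mono hsp hd hshort hi (Nat.le_of_lt hij) hjd
end
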